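/- arXiv:quant-ph/0008047 — 2 statements merged into one kernel-verified Lean document; each statement's English description precedes it below -/
import Mathlib

section
/- For any states ρ₁ and ρ₂ on bipartite systems and any real numbers K, K' > 0, one has F_Γ(ρ₁;K')·F_Γ(ρ₂;K/K') ≤ F_Γ(ρ₁ ⊗ ρ₂; K) ≤ F_Γ(ρ₁; K / Tr|ρ₂^Γ|), where the tensor product ρ₁ ⊗ ρ₂ is regarded as a state on the bipartite system grouping the two first factors against the two second factors. -/
open Matrix Filter
open scoped ComplexOrder

noncomputable section

/-- Partial transpose on the second tensor factor:
`ptrans M ((i,j),(k,l)) = M ((i,l),(k,j))`. -/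
def ptrans {ι κ : Type*} (M : Matrix (ι × κ) (ι × κ) ℂ) : Matrix (ι × κ) (ι × κ) ℂ :=
  fun x y => M (x.1, y.2) (y.1, x.2)

/-- Fidelity of `K`-state p.p.t. distillation:
the supremum of `Tr(Fρ)` over Hermitian `F` with `0 ≤ F ≤ 1` and `-1/K ≤ F^Γ ≤ 1/K`. -/
def FGamma {ι κ : Type*} [Fintype ι] [Fintype κ] [DecidableEq ι] [DecidableEq κ]
    (ρ : Matrix (ι × κ) (ι × κ) ℂ) (K : ℝ) : ℝ :=
  sSup {x : ℝ | ∃ F : Matrix (ι × κ) (ι × κ) ℂ,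
    F.PosSemidef ∧ (1 - F).PosSemidef ∧
    (((1 / K : ℝ) : ℂ) • 1 - ptrans F).PosSemidef ∧
    (ptrans F + ((1 / K : ℝ) : ℂ) • 1).PosSemidef ∧
    x = ((F * ρ).trace).re}

/-- Trace of the positive part of a Hermitian matrix: `Tr(A₊) = ∑ᵢ max(λᵢ, 0)`. -/
def tracePos {n : Type*} [Fintype n] [DecidableEq n] (A : Matrix n n ℂ) : ℝ :=
  if h : A.IsHermitian then ∑ i, max (h.eigenvalues i) 0 else 0

/-- Trace norm of a Hermitian matrix: `Tr|A| = ∑ᵢ |λᵢ|`. -/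
def traceAbs {n : Type*} [Fintype n] [DecidableEq n] (A : Matrix n n ℂ) : ℝ :=
  if h : A.IsHermitian then ∑ i, |h.eigenvalues i| else 0

/-- Tensor product of two bipartite matrices, regrouped as a bipartite matrix
(first factors against second factors). -/
def tensorBip {ι₁ κ₁ ι₂ κ₂ : Type*}
    (ρ₁ : Matrix (ι₁ × κ₁) (ι₁ × κ₁) ℂ) (ρ₂ : Matrix (ι₂ × κ₂) (ι₂ × κ₂) ℂ) :
    Matrix ((ι₁ × ι₂) × (κ₁ × κ₂)) ((ι₁ × ι₂) × (κ₁ × κ₂)) ℂ :=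
  fun x y => ρ₁ (x.1.1, x.2.1) (y.1.1, y.2.1) * ρ₂ (x.1.2, x.2.2) (y.1.2, y.2.2)


/-! Lower bound: if `F₁`, `F₂` are admissible for `K₁`, `K₂`, then `F₁ ⊗ F₂` is admissible for
`K₁ K₂`. With `A = F₁^Γ`, `a = 1/K₁`, `B = F₂^Γ`, `b = 1/K₂`, the bounds `−a ≤ A ≤ a` and
`−b ≤ B ≤ b` give `ab − A ⊗ B = ½ [(a − A) ⊗ (B + b) + (A + a) ⊗ (b − B)] ≥ 0`, and likewise
`A ⊗ B + ab ≥ 0`; the fidelity of `F₁ ⊗ F₂` against `ρ₁ ⊗ ρ₂` is `Tr(F₁ρ₁) Tr(F₂ρ₂)`.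

Upper bound: if `F` is admissible for `ρ₁ ⊗ ρ₂`, then `Tr₂[F (1 ⊗ ρ₂)]` has the same fidelity
against `ρ₁` and lies between `0` and `1`. Splitting `ρ₂^Γ = P − N` into positive and negative
parts, its partial transpose is `Tr₂[F^Γ (1 ⊗ P)] − Tr₂[F^Γ (1 ⊗ N)]`, which lies between
`∓ (Tr P + Tr N)/K = ∓ Tr|ρ₂^Γ|/K`. -/

open scoped Kronecker

theorem Real.sSup_mul_sSup_le {s t : Set ℝ} {c : ℝ} (hs : ∀ x ∈ s, 0 ≤ x) (hc : 0 ≤ c)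
    (h : ∀ x ∈ s, ∀ y ∈ t, x * y ≤ c) : sSup s * sSup t ≤ c := by
  have exists_lt {u : Set ℝ} {r : ℝ} (hr : 0 ≤ r) (hru : r < sSup u) : ∃ x ∈ u, r < x :=
    exists_lt_of_lt_csSup (Set.nonempty_iff_ne_empty.mpr fun hu => by
      rw [hu, Real.sSup_empty] at hru; linarith) hru
  refine mul_le_of_forall_lt_of_nonneg (Real.sSup_nonneg hs) hc fun a ha has b hb hbt => ?_
  obtain ⟨x, hx, hax⟩ := exists_lt ha has
  obtain ⟨y, hy, hby⟩ := exists_lt hb hbt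
  exact (mul_le_mul hax.le hby.le hb (hs x hx)).trans (h x hx y hy)

section GeneralFacts
variable {n : Type*} [Fintype n]

open scoped MatrixOrder in
theorem Matrix.PosSemidef.trace_mul_nonneg {A B : Matrix n n ℂ} (hA : A.PosSemidef)
    (hB : B.PosSemidef) : 0 ≤ (A * B).trace := by
  classical
  obtain ⟨C, rfl⟩ := CStarAlgebra.nonneg_iff_eq_star_mul_self.mp hB.nonneg
  rw [star_eq_conjTranspose, ← Matrix.mul_assoc, trace_mul_cycle]
  exact (hA.mul_mul_conjTranspose_same C).trace_nonneg

theorem Matrix.trace_mul_vecMulVec_star (M : Matrix n n ℂ) (v : n → ℂ) :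
    (M * vecMulVec v (star v)).trace = star v ⬝ᵥ (M *ᵥ v) := by
  rw [mul_vecMulVec, trace_vecMulVec, dotProduct_comm]

variable [DecidableEq n]

/-- Over `ℂ`, nonnegativity of `star x ⬝ᵥ (M *ᵥ x)` in the complex order already forces it to be
real, hence `M` to be Hermitian. -/
theorem Matrix.posSemidef_iff_forall_dotProduct_mulVec_nonneg {M : Matrix n n ℂ} :
    M.PosSemidef ↔ ∀ x, 0 ≤ star x ⬝ᵥ (M *ᵥ x) := by
  rw [← isPositive_toEuclideanLin_iff, LinearMap.isPositive_iff_complex]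
  refine (EuclideanSpace.equiv n ℂ).forall_congr' fun x => ?_
  rw [EuclideanSpace.inner_eq_star_dotProduct, dotProduct_star, dotProduct_comm, Complex.nonneg_iff]
  simp [Complex.ext_iff, eq_comm, and_comm]

open scoped MatrixOrder in
theorem Matrix.IsHermitian.trace_cfc {A : Matrix n n ℂ} (hA : A.IsHermitian) (f : ℝ → ℝ) :
    (cfc f A).trace = ∑ i, (f (hA.eigenvalues i) : ℂ) := by
  rw [hA.cfc_eq, IsHermitian.cfc, Unitary.conjStarAlgAut_apply, trace_mul_cycle,
    Unitary.coe_star_mul_self, Matrix.one_mul, trace_diagonal]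
  rfl

open scoped MatrixOrder in
theorem Matrix.IsHermitian.exists_sub_posSemidef_trace_add_eq_traceAbs {A : Matrix n n ℂ}
    (hA : A.IsHermitian) :
    ∃ P N : Matrix n n ℂ, P.PosSemidef ∧ N.PosSemidef ∧ A = P - N ∧
      P.trace + N.trace = traceAbs A := by
  refine ⟨cfc (fun x : ℝ => max x 0) A, cfc (fun x : ℝ => max (-x) 0) A,
    (cfc_nonneg fun x _ => le_max_right x 0).posSemidef,
    (cfc_nonneg fun x _ => le_max_right (-x) 0).posSemidef, ?_, ?_⟩
  · rw [← cfc_sub ..]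
    conv_lhs => rw [← cfc_id' ℝ A]
    exact cfc_congr fun x _ => (max_zero_sub_max_neg_zero_eq_self x).symm
  · rw [hA.trace_cfc, hA.trace_cfc, ← Finset.sum_add_distrib, traceAbs, dif_pos hA]
    push_cast
    simp only [← Complex.ofReal_add, max_zero_add_max_neg_zero_eq_abs_self]

end GeneralFacts

theorem Matrix.IsHermitian.ptrans {ι κ : Type*} {M : Matrix (ι × κ) (ι × κ) ℂ}
    (hM : M.IsHermitian) : (_root_.ptrans M).IsHermitian :=
  ext fun x y => congrFun (congrFun hM (x.1, y.2)) (y.1, x.2)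

section TensorBip
variable {ι₁ κ₁ ι₂ κ₂ : Type*}

theorem ptrans_tensorBip (A : Matrix (ι₁ × κ₁) (ι₁ × κ₁) ℂ) (B : Matrix (ι₂ × κ₂) (ι₂ × κ₂) ℂ) :
    ptrans (tensorBip A B) = tensorBip (ptrans A) (ptrans B) :=
  rfl

theorem tensorBip_eq_submatrix_kronecker (A : Matrix (ι₁ × κ₁) (ι₁ × κ₁) ℂ)
    (B : Matrix (ι₂ × κ₂) (ι₂ × κ₂) ℂ) :
    tensorBip A B = (A ⊗ₖ B).submatrix (Equiv.prodProdProdComm ι₁ ι₂ κ₁ κ₂)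
      (Equiv.prodProdProdComm ι₁ ι₂ κ₁ κ₂) :=
  rfl

theorem tensorBip_add_left (A A' : Matrix (ι₁ × κ₁) (ι₁ × κ₁) ℂ)
    (B : Matrix (ι₂ × κ₂) (ι₂ × κ₂) ℂ) : tensorBip (A + A') B = tensorBip A B + tensorBip A' B := by
  ext; simp [tensorBip, add_mul]

theorem tensorBip_add_right (A : Matrix (ι₁ × κ₁) (ι₁ × κ₁) ℂ)
    (B B' : Matrix (ι₂ × κ₂) (ι₂ × κ₂) ℂ) : tensorBip A (B + B') = tensorBip A B + tensorBip A B' := by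
  ext; simp [tensorBip, mul_add]

theorem tensorBip_sub_left (A A' : Matrix (ι₁ × κ₁) (ι₁ × κ₁) ℂ)
    (B : Matrix (ι₂ × κ₂) (ι₂ × κ₂) ℂ) : tensorBip (A - A') B = tensorBip A B - tensorBip A' B := by
  ext; simp [tensorBip, sub_mul]

theorem tensorBip_sub_right (A : Matrix (ι₁ × κ₁) (ι₁ × κ₁) ℂ)
    (B B' : Matrix (ι₂ × κ₂) (ι₂ × κ₂) ℂ) : tensorBip A (B - B') = tensorBip A B - tensorBip A B' := by
  ext; simp [tensorBip, mul_sub]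

theorem tensorBip_smul_left (c : ℂ) (A : Matrix (ι₁ × κ₁) (ι₁ × κ₁) ℂ)
    (B : Matrix (ι₂ × κ₂) (ι₂ × κ₂) ℂ) : tensorBip (c • A) B = c • tensorBip A B := by
  ext; simp [tensorBip, mul_assoc]

theorem tensorBip_smul_right (c : ℂ) (A : Matrix (ι₁ × κ₁) (ι₁ × κ₁) ℂ)
    (B : Matrix (ι₂ × κ₂) (ι₂ × κ₂) ℂ) : tensorBip A (c • B) = c • tensorBip A B := by
  ext; simp [tensorBip, mul_left_comm]

theorem tensorBip_one [DecidableEq ι₁] [DecidableEq κ₁] [DecidableEq ι₂] [DecidableEq κ₂] :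
    tensorBip (1 : Matrix (ι₁ × κ₁) (ι₁ × κ₁) ℂ) (1 : Matrix (ι₂ × κ₂) (ι₂ × κ₂) ℂ) = 1 := by
  rw [tensorBip_eq_submatrix_kronecker, one_kronecker_one, submatrix_one_equiv]

variable [Fintype ι₁] [Fintype κ₁] [Fintype ι₂] [Fintype κ₂]

theorem tensorBip_mul_tensorBip (A C : Matrix (ι₁ × κ₁) (ι₁ × κ₁) ℂ)
    (B D : Matrix (ι₂ × κ₂) (ι₂ × κ₂) ℂ) :
    tensorBip A B * tensorBip C D = tensorBip (A * C) (B * D) := by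
  simp only [tensorBip_eq_submatrix_kronecker, submatrix_mul_equiv, mul_kronecker_mul]

theorem trace_tensorBip (A : Matrix (ι₁ × κ₁) (ι₁ × κ₁) ℂ) (B : Matrix (ι₂ × κ₂) (ι₂ × κ₂) ℂ) :
    (tensorBip A B).trace = A.trace * B.trace := by
  rw [← trace_kronecker, tensorBip_eq_submatrix_kronecker]
  exact Equiv.sum_comp _ fun i => (A ⊗ₖ B) i i

theorem re_trace_tensorBip_mul_tensorBip {A C : Matrix (ι₁ × κ₁) (ι₁ × κ₁) ℂ}
    (B D : Matrix (ι₂ × κ₂) (ι₂ × κ₂) ℂ) (hAC : 0 ≤ (A * C).trace) :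
    (tensorBip A B * tensorBip C D).trace.re = (A * C).trace.re * (B * D).trace.re := by
  rw [tensorBip_mul_tensorBip, trace_tensorBip, Complex.mul_re, ← (Complex.nonneg_iff.mp hAC).2,
    zero_mul, sub_zero]

theorem Matrix.PosSemidef.tensorBip {A : Matrix (ι₁ × κ₁) (ι₁ × κ₁) ℂ}
    {B : Matrix (ι₂ × κ₂) (ι₂ × κ₂) ℂ} (hA : A.PosSemidef) (hB : B.PosSemidef) :
    (_root_.tensorBip A B).PosSemidef :=
  (hA.kronecker hB).submatrix (Equiv.prodProdProdComm ι₁ ι₂ κ₁ κ₂)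

variable [DecidableEq ι₁] [DecidableEq κ₁] [DecidableEq ι₂] [DecidableEq κ₂]

theorem posSemidef_smul_one_sub_tensorBip_and_tensorBip_add_smul_one
    {A : Matrix (ι₁ × κ₁) (ι₁ × κ₁) ℂ} {B : Matrix (ι₂ × κ₂) (ι₂ × κ₂) ℂ} {a b : ℂ}
    (hA₁ : (a • 1 - A).PosSemidef) (hA₂ : (A + a • 1).PosSemidef)
    (hB₁ : (b • 1 - B).PosSemidef) (hB₂ : (B + b • 1).PosSemidef) :
    ((a * b) • 1 - tensorBip A B).PosSemidef ∧ (tensorBip A B + (a * b) • 1).PosSemidef := by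
  have half : (0 : ℂ) ≤ 2⁻¹ := by positivity
  constructor
  · have h : (a * b) • 1 - tensorBip A B =
        (2⁻¹ : ℂ) • (tensorBip (a • 1 - A) (B + b • 1) + tensorBip (A + a • 1) (b • 1 - B)) := by
      simp only [tensorBip_sub_left, tensorBip_sub_right, tensorBip_add_left, tensorBip_add_right,
        tensorBip_smul_left, tensorBip_smul_right, tensorBip_one]
      module
    rw [h]
    exact ((hA₁.tensorBip hB₂).add (hA₂.tensorBip hB₁)).smul half
  · have h : tensorBip A B + (a * b) • 1 =
        (2⁻¹ : ℂ) • (tensorBip (A + a • 1) (B + b • 1) + tensorBip (a • 1 - A) (b • 1 - B)) := by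
      simp only [tensorBip_sub_left, tensorBip_sub_right, tensorBip_add_left, tensorBip_add_right,
        tensorBip_smul_left, tensorBip_smul_right, tensorBip_one]
      module
    rw [h]
    exact ((hA₂.tensorBip hB₂).add (hA₁.tensorBip hB₁)).smul half

end TensorBip

section PartialTraceMul
variable {ι₁ κ₁ ι₂ κ₂ : Type*} [Fintype ι₂] [Fintype κ₂]

/-- `partialTraceMul σ F = Tr₂ [F (1 ⊗ σ)]`, the adjoint of `τ ↦ τ ⊗ σ` for the trace pairing. -/
def partialTraceMul (σ : Matrix (ι₂ × κ₂) (ι₂ × κ₂) ℂ)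
    (F : Matrix ((ι₁ × ι₂) × (κ₁ × κ₂)) ((ι₁ × ι₂) × (κ₁ × κ₂)) ℂ) :
    Matrix (ι₁ × κ₁) (ι₁ × κ₁) ℂ :=
  fun x y => ∑ z : (ι₂ × κ₂) × (ι₂ × κ₂),
    F ((x.1, z.1.1), (x.2, z.1.2)) ((y.1, z.2.1), (y.2, z.2.2)) * σ z.2 z.1

theorem partialTraceMul_sub_left (σ τ : Matrix (ι₂ × κ₂) (ι₂ × κ₂) ℂ)
    (F : Matrix ((ι₁ × ι₂) × (κ₁ × κ₂)) ((ι₁ × ι₂) × (κ₁ × κ₂)) ℂ) :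
    partialTraceMul (σ - τ) F = partialTraceMul σ F - partialTraceMul τ F := by
  ext; simp [partialTraceMul, mul_sub, Finset.sum_sub_distrib]

theorem partialTraceMul_add_right (σ : Matrix (ι₂ × κ₂) (ι₂ × κ₂) ℂ)
    (F G : Matrix ((ι₁ × ι₂) × (κ₁ × κ₂)) ((ι₁ × ι₂) × (κ₁ × κ₂)) ℂ) :
    partialTraceMul σ (F + G) = partialTraceMul σ F + partialTraceMul σ G := by
  ext; simp [partialTraceMul, add_mul, Finset.sum_add_distrib]

theorem partialTraceMul_sub_right (σ : Matrix (ι₂ × κ₂) (ι₂ × κ₂) ℂ)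
    (F G : Matrix ((ι₁ × ι₂) × (κ₁ × κ₂)) ((ι₁ × ι₂) × (κ₁ × κ₂)) ℂ) :
    partialTraceMul σ (F - G) = partialTraceMul σ F - partialTraceMul σ G := by
  ext; simp [partialTraceMul, sub_mul, Finset.sum_sub_distrib]

theorem partialTraceMul_smul_right (σ : Matrix (ι₂ × κ₂) (ι₂ × κ₂) ℂ) (c : ℂ)
    (F : Matrix ((ι₁ × ι₂) × (κ₁ × κ₂)) ((ι₁ × ι₂) × (κ₁ × κ₂)) ℂ) :
    partialTraceMul σ (c • F) = c • partialTraceMul σ F := by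
  ext; simp [partialTraceMul, Finset.mul_sum, mul_assoc]

theorem ptrans_partialTraceMul (σ : Matrix (ι₂ × κ₂) (ι₂ × κ₂) ℂ)
    (F : Matrix ((ι₁ × ι₂) × (κ₁ × κ₂)) ((ι₁ × ι₂) × (κ₁ × κ₂)) ℂ) :
    ptrans (partialTraceMul σ F) = partialTraceMul (ptrans σ) (ptrans F) :=
  ext fun _ _ => Fintype.sum_equiv
    (Function.Involutive.toPerm (fun z => ((z.1.1, z.2.2), (z.2.1, z.1.2))) fun _ => rfl) _ _
    fun _ => rfl

variable [Fintype ι₁] [Fintype κ₁]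

theorem trace_partialTraceMul_mul (σ : Matrix (ι₂ × κ₂) (ι₂ × κ₂) ℂ)
    (F : Matrix ((ι₁ × ι₂) × (κ₁ × κ₂)) ((ι₁ × ι₂) × (κ₁ × κ₂)) ℂ)
    (τ : Matrix (ι₁ × κ₁) (ι₁ × κ₁) ℂ) :
    (partialTraceMul σ F * τ).trace = (F * tensorBip τ σ).trace := by
  let e := Equiv.prodProdProdComm ι₁ κ₁ ι₂ κ₂
  simp only [trace, diag, mul_apply, partialTraceMul, tensorBip, Finset.sum_mul]
  rw [← Fintype.sum_prod_type', ← Fintype.sum_prod_type', ← Fintype.sum_prod_type']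
  exact Fintype.sum_equiv ((Equiv.prodProdProdComm _ _ _ _).trans (e.prodCongr e)) _ _
    fun _ => by simp [e]; ring

variable [DecidableEq ι₁] [DecidableEq κ₁]

theorem Matrix.PosSemidef.partialTraceMul {σ : Matrix (ι₂ × κ₂) (ι₂ × κ₂) ℂ}
    {F : Matrix ((ι₁ × ι₂) × (κ₁ × κ₂)) ((ι₁ × ι₂) × (κ₁ × κ₂)) ℂ}
    (hF : F.PosSemidef) (hσ : σ.PosSemidef) : (_root_.partialTraceMul σ F).PosSemidef := by
  refine posSemidef_iff_forall_dotProduct_mulVec_nonneg.mpr fun v => ?_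
  rw [← trace_mul_vecMulVec_star, trace_partialTraceMul_mul]
  exact hF.trace_mul_nonneg ((posSemidef_vecMulVec_self_star v).tensorBip hσ)

variable [DecidableEq ι₂] [DecidableEq κ₂]

theorem partialTraceMul_one (σ : Matrix (ι₂ × κ₂) (ι₂ × κ₂) ℂ) :
    partialTraceMul σ (1 : Matrix ((ι₁ × ι₂) × (κ₁ × κ₂)) _ ℂ) = σ.trace • 1 := by
  refine ext_iff_trace_mul_right.mpr fun τ => ?_
  rw [trace_partialTraceMul_mul, Matrix.one_mul, trace_tensorBip, smul_mul_assoc, Matrix.one_mul,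
    trace_smul, smul_eq_mul, mul_comm]

end PartialTraceMul

section IsPPTTest
variable {ι κ : Type*} [DecidableEq ι] [DecidableEq κ]

structure IsPPTTest (K : ℝ) (F : Matrix (ι × κ) (ι × κ) ℂ) : Prop where
  posSemidef : F.PosSemidef
  posSemidef_one_sub : (1 - F).PosSemidef
  posSemidef_smul_one_sub_ptrans : (((1 / K : ℝ) : ℂ) • 1 - ptrans F).PosSemidef
  posSemidef_ptrans_add_smul_one : (ptrans F + ((1 / K : ℝ) : ℂ) • 1).PosSemidef

theorem isPPTTest_zero {K : ℝ} (hK : 0 < K) : IsPPTTest K (0 : Matrix (ι × κ) (ι × κ) ℂ) := by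
  have hc : (((1 / K : ℝ) : ℂ) • (1 : Matrix (ι × κ) (ι × κ) ℂ)).PosSemidef :=
    PosSemidef.one.smul (by norm_cast; positivity)
  have h0 : ptrans (0 : Matrix (ι × κ) (ι × κ) ℂ) = 0 := rfl
  exact ⟨.zero, by simpa using PosSemidef.one, by simpa [h0] using hc, by simpa [h0] using hc⟩

variable [Fintype ι] [Fintype κ]

theorem FGamma_eq_sSup_image (ρ : Matrix (ι × κ) (ι × κ) ℂ) (K : ℝ) :
    FGamma ρ K = sSup ((fun F => (F * ρ).trace.re) '' {F | IsPPTTest K F}) := by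
  refine congrArg sSup (Set.ext fun x => ⟨?_, ?_⟩)
  · rintro ⟨F, h₁, h₂, h₃, h₄, rfl⟩
    exact ⟨F, ⟨h₁, h₂, h₃, h₄⟩, rfl⟩
  · rintro ⟨F, ⟨h₁, h₂, h₃, h₄⟩, rfl⟩
    exact ⟨F, h₁, h₂, h₃, h₄, rfl⟩

variable {ρ : Matrix (ι × κ) (ι × κ) ℂ} {K : ℝ} {F : Matrix (ι × κ) (ι × κ) ℂ}

theorem IsPPTTest.re_trace_mul_nonneg (hF : IsPPTTest K F) (hρ : ρ.PosSemidef) :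
    0 ≤ (F * ρ).trace.re :=
  (Complex.nonneg_iff.mp (hF.posSemidef.trace_mul_nonneg hρ)).1

theorem IsPPTTest.re_trace_mul_le (hF : IsPPTTest K F) (hρ : ρ.PosSemidef) :
    (F * ρ).trace.re ≤ ρ.trace.re := by
  have h := (Complex.nonneg_iff.mp (hF.posSemidef_one_sub.trace_mul_nonneg hρ)).1
  rw [Matrix.sub_mul, Matrix.one_mul, trace_sub, Complex.sub_re] at h
  linarith

theorem FGamma_nonneg (hρ : ρ.PosSemidef) (K : ℝ) : 0 ≤ FGamma ρ K := by
  rw [FGamma_eq_sSup_image]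
  exact Real.sSup_nonneg (Set.forall_mem_image.mpr fun _ hF => hF.re_trace_mul_nonneg hρ)

theorem bddAbove_re_trace_mul_image (hρ : ρ.PosSemidef) (K : ℝ) :
    BddAbove ((fun F => (F * ρ).trace.re) '' {F | IsPPTTest K F}) :=
  ⟨ρ.trace.re, Set.forall_mem_image.mpr fun _ hF => hF.re_trace_mul_le hρ⟩

end IsPPTTest

section Bounds
variable {ι₁ κ₁ ι₂ κ₂ : Type*} [Fintype ι₁] [Fintype κ₁] [Fintype ι₂] [Fintype κ₂]
  [DecidableEq ι₁] [DecidableEq κ₁] [DecidableEq ι₂] [DecidableEq κ₂]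

theorem IsPPTTest.tensorBip {K₁ K₂ : ℝ} {F₁ : Matrix (ι₁ × κ₁) (ι₁ × κ₁) ℂ}
    {F₂ : Matrix (ι₂ × κ₂) (ι₂ × κ₂) ℂ} (h₁ : IsPPTTest K₁ F₁) (h₂ : IsPPTTest K₂ F₂) :
    IsPPTTest (K₁ * K₂) (_root_.tensorBip F₁ F₂) := by
  have hK : ((1 / (K₁ * K₂) : ℝ) : ℂ) = ((1 / K₁ : ℝ) : ℂ) * ((1 / K₂ : ℝ) : ℂ) := by
    push_cast; ring
  have hbounds := posSemidef_smul_one_sub_tensorBip_and_tensorBip_add_smul_one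
    h₁.posSemidef_smul_one_sub_ptrans h₁.posSemidef_ptrans_add_smul_one
    h₂.posSemidef_smul_one_sub_ptrans h₂.posSemidef_ptrans_add_smul_one
  refine ⟨h₁.posSemidef.tensorBip h₂.posSemidef, ?_, ?_, ?_⟩
  · have h : 1 - _root_.tensorBip F₁ F₂ =
        _root_.tensorBip (1 - F₁) F₂ + _root_.tensorBip 1 (1 - F₂) := by
      rw [tensorBip_sub_left, tensorBip_sub_right, tensorBip_one]
      abel
    rw [h]
    exact (h₁.posSemidef_one_sub.tensorBip h₂.posSemidef).add
      (PosSemidef.one.tensorBip h₂.posSemidef_one_sub)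
  · rw [ptrans_tensorBip, hK]
    exact hbounds.1
  · rw [ptrans_tensorBip, hK]
    exact hbounds.2

theorem IsPPTTest.partialTraceMul {K t : ℝ}
    {F : Matrix ((ι₁ × ι₂) × (κ₁ × κ₂)) ((ι₁ × ι₂) × (κ₁ × κ₂)) ℂ}
    {σ P N : Matrix (ι₂ × κ₂) (ι₂ × κ₂) ℂ} (hF : IsPPTTest K F)
    (hσ : σ.PosSemidef) (hσtr : σ.trace = 1) (hP : P.PosSemidef) (hN : N.PosSemidef)
    (hσPN : ptrans σ = P - N) (ht : P.trace + N.trace = t) :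
    IsPPTTest (K / t) (_root_.partialTraceMul σ F) := by
  have hscalar : ((1 / (K / t) : ℝ) : ℂ) • (1 : Matrix (ι₁ × κ₁) (ι₁ × κ₁) ℂ) =
      _root_.partialTraceMul P (((1 / K : ℝ) : ℂ) • 1) +
        _root_.partialTraceMul N (((1 / K : ℝ) : ℂ) • 1) := by
    rw [partialTraceMul_smul_right, partialTraceMul_smul_right, partialTraceMul_one,
      partialTraceMul_one, smul_smul, smul_smul, ← add_smul, ← mul_add, ht, one_div_div]
    congr 1
    push_cast
    ring
  refine ⟨hF.posSemidef.partialTraceMul hσ, ?_, ?_, ?_⟩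
  · have h : 1 - _root_.partialTraceMul σ F = _root_.partialTraceMul σ (1 - F) := by
      rw [partialTraceMul_sub_right, partialTraceMul_one, hσtr, one_smul]
    rw [h]
    exact hF.posSemidef_one_sub.partialTraceMul hσ
  · have h : ((1 / (K / t) : ℝ) : ℂ) • 1 - ptrans (_root_.partialTraceMul σ F) =
        _root_.partialTraceMul P (((1 / K : ℝ) : ℂ) • 1 - ptrans F) +
          _root_.partialTraceMul N (ptrans F + ((1 / K : ℝ) : ℂ) • 1) := by
      rw [hscalar, ptrans_partialTraceMul, hσPN, partialTraceMul_sub_left,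
        partialTraceMul_sub_right, partialTraceMul_add_right]
      abel
    rw [h]
    exact (hF.posSemidef_smul_one_sub_ptrans.partialTraceMul hP).add
      (hF.posSemidef_ptrans_add_smul_one.partialTraceMul hN)
  · have h : ptrans (_root_.partialTraceMul σ F) + ((1 / (K / t) : ℝ) : ℂ) • 1 =
        _root_.partialTraceMul P (ptrans F + ((1 / K : ℝ) : ℂ) • 1) +
          _root_.partialTraceMul N (((1 / K : ℝ) : ℂ) • 1 - ptrans F) := by
      rw [hscalar, ptrans_partialTraceMul, hσPN, partialTraceMul_sub_left,
        partialTraceMul_sub_right, partialTraceMul_add_right]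
      abel
    rw [h]
    exact (hF.posSemidef_ptrans_add_smul_one.partialTraceMul hP).add
      (hF.posSemidef_smul_one_sub_ptrans.partialTraceMul hN)

variable {ρ₁ : Matrix (ι₁ × κ₁) (ι₁ × κ₁) ℂ} {ρ₂ : Matrix (ι₂ × κ₂) (ι₂ × κ₂) ℂ}

theorem FGamma_mul_FGamma_le_FGamma_tensorBip (hρ₁ : ρ₁.PosSemidef) (hρ₂ : ρ₂.PosSemidef)
    (K₁ K₂ : ℝ) : FGamma ρ₁ K₁ * FGamma ρ₂ K₂ ≤ FGamma (tensorBip ρ₁ ρ₂) (K₁ * K₂) := by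
  have hρ : (tensorBip ρ₁ ρ₂).PosSemidef := hρ₁.tensorBip hρ₂
  rw [FGamma_eq_sSup_image ρ₁, FGamma_eq_sSup_image ρ₂]
  refine Real.sSup_mul_sSup_le (Set.forall_mem_image.mpr fun _ hF => hF.re_trace_mul_nonneg hρ₁)
    (FGamma_nonneg hρ _) ?_
  rintro _ ⟨F₁, hF₁, rfl⟩ _ ⟨F₂, hF₂, rfl⟩
  rw [FGamma_eq_sSup_image]
  exact le_csSup (bddAbove_re_trace_mul_image hρ _) ⟨tensorBip F₁ F₂, hF₁.tensorBip hF₂,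
    re_trace_tensorBip_mul_tensorBip _ _ (hF₁.posSemidef.trace_mul_nonneg hρ₁)⟩

theorem FGamma_tensorBip_le (hρ₁ : ρ₁.PosSemidef) (hρ₂ : ρ₂.PosSemidef) (hρ₂tr : ρ₂.trace = 1)
    {K : ℝ} (hK : 0 < K) :
    FGamma (tensorBip ρ₁ ρ₂) K ≤ FGamma ρ₁ (K / traceAbs (ptrans ρ₂)) := by
  obtain ⟨P, N, hP, hN, hσPN, ht⟩ :=
    hρ₂.isHermitian.ptrans.exists_sub_posSemidef_trace_add_eq_traceAbs
  rw [FGamma_eq_sSup_image, FGamma_eq_sSup_image]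
  refine csSup_le_csSup (bddAbove_re_trace_mul_image hρ₁ _) ⟨0, 0, isPPTTest_zero hK, by simp⟩ ?_
  rintro _ ⟨F, hF, rfl⟩
  exact ⟨_, hF.partialTraceMul hρ₂ hρ₂tr hP hN hσPN ht,
    congrArg Complex.re (trace_partialTraceMul_mul ρ₂ F ρ₁)⟩

end Bounds

theorem FGamma_tensor_bounds_general {a b c e : ℕ}
    (ρ₁ : Matrix (Fin a × Fin b) (Fin a × Fin b) ℂ)
    (ρ₂ : Matrix (Fin c × Fin e) (Fin c × Fin e) ℂ)
    (hρ₁ : ρ₁.PosSemidef)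
    (hρ₂ : ρ₂.PosSemidef) (hρ₂tr : ρ₂.trace = 1)
    (K K' : ℝ) (hK : 0 < K) (hK' : 0 < K') :
    FGamma ρ₁ K' * FGamma ρ₂ (K / K') ≤ FGamma (tensorBip ρ₁ ρ₂) K ∧
      FGamma (tensorBip ρ₁ ρ₂) K ≤ FGamma ρ₁ (K / traceAbs (ptrans ρ₂)) := by
  refine ⟨?_, FGamma_tensorBip_le hρ₁ hρ₂ hρ₂tr hK⟩
  simpa only [mul_div_cancel₀ K hK'.ne'] using
    FGamma_mul_FGamma_le_FGamma_tensorBip hρ₁ hρ₂ K' (K / K')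

/-- Tensor product bounds:
`F_Γ(ρ₁;K') F_Γ(ρ₂;K/K') ≤ F_Γ(ρ₁⊗ρ₂;K) ≤ F_Γ(ρ₁; K/Tr|ρ₂^Γ|)`. -/
theorem FGamma_tensor_bounds {a b c e : ℕ}
    (ρ₁ : Matrix (Fin a × Fin b) (Fin a × Fin b) ℂ)
    (ρ₂ : Matrix (Fin c × Fin e) (Fin c × Fin e) ℂ)
    (hρ₁ : ρ₁.PosSemidef) (hρ₁tr : ρ₁.trace = 1)
    (hρ₂ : ρ₂.PosSemidef) (hρ₂tr : ρ₂.trace = 1)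
    (K K' : ℝ) (hK : 0 < K) (hK' : 0 < K') :
    FGamma ρ₁ K' * FGamma ρ₂ (K / K') ≤ FGamma (tensorBip ρ₁ ρ₂) K ∧
      FGamma (tensorBip ρ₁ ρ₂) K ≤ FGamma ρ₁ (K / traceAbs (ptrans ρ₂)) :=
  FGamma_tensor_bounds_general ρ₁ ρ₂ hρ₁ hρ₂ hρ₂tr K K' hK hK'
end
end

section
/- Let V be a finite-dimensional Hilbert space and let 1 = Σ_{i=1}^m P_i be a partition of the identity on V ⊗ V into mutually orthogonal projections P_i. For each i, let s_i be the largest eigenvalue of |P_i^Γ|. Then for any state ρ on V ⊗ V, setting r_i := Tr(P_i ρ), the p.p.t. distillable entanglement satisfies D_Γ(ρ) ≥ Σ_{i=1}^m r_i·(log₂ r_i − log₂ s_i), with the convention that terms with r_i = 0 are zero. -/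
open Matrix Filter
open scoped ComplexOrder
noncomputable section

theorem sum_comm2 {α β M : Type*} [Fintype α] [Fintype β] [AddCommMonoid M]
    (g : α → β → M) : ∑ x, ∑ y, g x y = ∑ y, ∑ x, g x y := Finset.sum_comm

theorem sum_comm3' {α β γ M : Type*} [Fintype α] [Fintype β] [Fintype γ] [AddCommMonoid M]
    (g : α → β → γ → M) : ∑ x, ∑ y, ∑ z, g x y z = ∑ y, ∑ z, ∑ x, g x y z :=
  Finset.sum_comm.trans (Finset.sum_congr rfl fun _ _ => Finset.sum_comm)

theorem sum_comm3 {α β γ M : Type*} [Fintype α] [Fintype β] [Fintype γ] [AddCommMonoid M]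
    (g : α → β → γ → M) : ∑ x, ∑ y, ∑ f, g x y f = ∑ f, ∑ x, ∑ y, g x y f :=
  (Finset.sum_congr rfl fun _ _ => Finset.sum_comm).trans Finset.sum_comm

theorem herm_entry {ν : Type*} [Fintype ν] [DecidableEq ν] {A : Matrix ν ν ℂ} (hA : A.IsHermitian)
    (x y : ν) :
    A x y = ∑ j, (hA.eigenvectorUnitary : Matrix ν ν ℂ) x j * (hA.eigenvalues j : ℂ)
      * star ((hA.eigenvectorUnitary : Matrix ν ν ℂ) y j) := by
  conv_lhs => rw [hA.spectral_theorem, Unitary.conjStarAlgAut_apply]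
  rw [Matrix.mul_apply]
  refine Finset.sum_congr rfl fun j _ => ?_
  rw [Matrix.mul_diagonal, Matrix.star_apply]
  rfl

theorem unit_entry {ν : Type*} [Fintype ν] [DecidableEq ν] {A : Matrix ν ν ℂ} (hA : A.IsHermitian)
    (x y : ν) :
    ∑ j, (hA.eigenvectorUnitary : Matrix ν ν ℂ) x j * star ((hA.eigenvectorUnitary : Matrix ν ν ℂ) y j)
      = (1 : Matrix ν ν ℂ) x y := by
  have h : (hA.eigenvectorUnitary : Matrix ν ν ℂ) * star (hA.eigenvectorUnitary : Matrix ν ν ℂ) = 1 :=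
    Matrix.mem_unitaryGroup_iff.mp hA.eigenvectorUnitary.2
  rw [← h, Matrix.mul_apply]; rfl

theorem W_psd {F N : Type*} [Fintype F] [Fintype N] [DecidableEq N]
    (W : F → N → ℂ) (μ : F → ℝ) (hμ : ∀ f, 0 ≤ μ f) :
    Matrix.PosSemidef (Matrix.of fun x y => ∑ f, (μ f : ℂ) * (W f x * star (W f y))) := by
  refine Matrix.posSemidef_iff_dotProduct_mulVec.mpr ⟨?_, ?_⟩
  · ext x y
    simp only [Matrix.conjTranspose_apply, Matrix.of_apply, star_sum, star_mul', star_star]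
    refine Finset.sum_congr rfl fun f _ => ?_
    rw [Complex.star_def, Complex.conj_ofReal]
    ring
  · intro v
    have key : (star v) ⬝ᵥ ((Matrix.of fun x y => ∑ f, (μ f : ℂ) * (W f x * star (W f y))) *ᵥ v)
        = ∑ f, (μ f : ℂ) * (star (∑ y, star (W f y) * v y) * (∑ y, star (W f y) * v y)) := by
      simp only [dotProduct, Matrix.mulVec, Matrix.of_apply, Pi.star_apply]
      simp only [star_sum, star_mul', star_star, Finset.mul_sum, Finset.sum_mul]
      rw [sum_comm3 (g := fun x y f => star (v x) * ((μ f:ℂ) * (W f x * star (W f y)) * v y))]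
      refine Finset.sum_congr rfl fun f _ => ?_
      rw [sum_comm2 (g := fun x y => star (v x) * ((μ f:ℂ) * (W f x * star (W f y)) * v y))]
      refine Finset.sum_congr rfl fun y _ => Finset.sum_congr rfl fun x _ => by ring
    rw [key]
    refine Finset.sum_nonneg fun f _ => ?_
    have h1 : (0:ℂ) ≤ (μ f : ℂ) := by exact_mod_cast Complex.zero_le_real.mpr (hμ f)
    exact mul_nonneg h1 (star_mul_self_nonneg _)

def mtprod {ι κ : Type*} {n : ℕ} (A : Fin n → Matrix (ι × κ) (ι × κ) ℂ) :
    Matrix ((Fin n → ι) × (Fin n → κ)) ((Fin n → ι) × (Fin n → κ)) ℂ :=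
  fun x y => ∏ i, A i (x.1 i, x.2 i) (y.1 i, y.2 i)

section tensor
variable {ι κ : Type*} [Fintype ι] [Fintype κ] [DecidableEq ι] [DecidableEq κ] {n : ℕ}
variable (A : Fin n → Matrix (ι × κ) (ι × κ) ℂ) (hA : ∀ i, (A i).IsHermitian)

def Wfam (f : Fin n → ι × κ) (x : (Fin n → ι) × (Fin n → κ)) : ℂ :=
  ∏ i, (((hA i).eigenvectorUnitary : Matrix (ι × κ) (ι × κ) ℂ) (x.1 i, x.2 i) (f i) : ℂ)

theorem mtprod_decomp : mtprod A = Matrix.of fun x y =>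
    ∑ f : Fin n → ι × κ, ((∏ i, (hA i).eigenvalues (f i) : ℝ) : ℂ)
      * (Wfam A hA f x * star (Wfam A hA f y)) := by
  ext x y
  show ∏ i, A i (x.1 i, x.2 i) (y.1 i, y.2 i) = _
  have h1 : ∀ i : Fin n, A i (x.1 i, x.2 i) (y.1 i, y.2 i) =
      ∑ j : ι × κ, (((hA i).eigenvectorUnitary : Matrix (ι × κ) (ι × κ) ℂ) (x.1 i, x.2 i) j : ℂ)
        * ((hA i).eigenvalues j : ℂ)
        * star ((((hA i).eigenvectorUnitary : Matrix (ι × κ) (ι × κ) ℂ) (y.1 i, y.2 i) j : ℂ)) :=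
    fun i => herm_entry (hA i) _ _
  rw [Finset.prod_congr rfl fun i _ => h1 i, Finset.prod_univ_sum]
  rw [Fintype.piFinset_univ]
  refine Finset.sum_congr rfl fun f _ => ?_
  rw [Wfam, Wfam, star_prod, Complex.ofReal_prod]
  rw [Finset.prod_mul_distrib, Finset.prod_mul_distrib]
  ring

theorem one_decomp : (1 : Matrix ((Fin n → ι) × (Fin n → κ)) ((Fin n → ι) × (Fin n → κ)) ℂ)
    = Matrix.of fun x y => ∑ f : Fin n → ι × κ, Wfam A hA f x * star (Wfam A hA f y) := by
  ext x y
  rw [Matrix.of_apply]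
  have this1 : ∀ f : Fin n → ι × κ, Wfam A hA f x * star (Wfam A hA f y) =
      ∏ i, ((((hA i).eigenvectorUnitary : Matrix (ι × κ) (ι × κ) ℂ) (x.1 i, x.2 i) (f i) : ℂ) *
        star ((((hA i).eigenvectorUnitary : Matrix (ι × κ) (ι × κ) ℂ) (y.1 i, y.2 i) (f i) : ℂ))) := by
    intro f
    rw [Wfam, Wfam, star_prod, Finset.prod_mul_distrib]
  rw [Finset.sum_congr rfl fun f _ => this1 f]
  rw [← Fintype.piFinset_univ,
    ← Finset.prod_univ_sum (t := fun _ : Fin n => (Finset.univ : Finset (ι × κ)))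
      (f := fun i j => ((((hA i).eigenvectorUnitary : Matrix (ι × κ) (ι × κ) ℂ) (x.1 i, x.2 i) j : ℂ) *
        star ((((hA i).eigenvectorUnitary : Matrix (ι × κ) (ι × κ) ℂ) (y.1 i, y.2 i) j : ℂ))))]
  have h2 : ∀ i : Fin n, (∑ j : ι × κ,
      ((((hA i).eigenvectorUnitary : Matrix (ι × κ) (ι × κ) ℂ) (x.1 i, x.2 i) j : ℂ) *
      star ((((hA i).eigenvectorUnitary : Matrix (ι × κ) (ι × κ) ℂ) (y.1 i, y.2 i) j : ℂ)))) =
      (1 : Matrix (ι × κ) (ι × κ) ℂ) (x.1 i, x.2 i) (y.1 i, y.2 i) :=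
    fun i => unit_entry (hA i) _ _
  rw [Finset.prod_congr rfl fun i _ => h2 i]
  by_cases h : x = y
  · subst h; simp [Matrix.one_apply]
  · have hex : ∃ i : Fin n, (x.1 i, x.2 i) ≠ (y.1 i, y.2 i) := by
      by_contra hc
      push_neg at hc
      exact h (Prod.ext (funext fun i => congrArg Prod.fst (hc i))
        (funext fun i => congrArg Prod.snd (hc i)))
    obtain ⟨i, hi⟩ := hex
    rw [Finset.prod_eq_zero (Finset.mem_univ i) (by simp [Matrix.one_apply, hi]),
      Matrix.one_apply_ne h]
end tensor
section P2
variable {N : Type*} [Fintype N] [DecidableEq N]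

theorem psd_add {A B : Matrix N N ℂ} (hA : A.PosSemidef) (hB : B.PosSemidef) :
    (A + B).PosSemidef :=
  Matrix.posSemidef_iff_dotProduct_mulVec.mpr ⟨hA.1.add hB.1, fun x => by
    rw [Matrix.add_mulVec, dotProduct_add]
    exact add_nonneg (hA.dotProduct_mulVec_nonneg x) (hB.dotProduct_mulVec_nonneg x)⟩

theorem psd_sum {α : Type*} (s : Finset α) (M : α → Matrix N N ℂ)
    (h : ∀ a ∈ s, (M a).PosSemidef) : (∑ a ∈ s, M a).PosSemidef := by
  classical
  induction s using Finset.induction_on with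
  | empty => simpa using Matrix.PosSemidef.zero
  | insert a s hx ih =>
    rw [Finset.sum_insert hx]
    exact psd_add (h _ (Finset.mem_insert_self _ _))
      (ih fun a ha => h a (Finset.mem_insert_of_mem ha))

theorem psd_smul_one {c : ℝ} (hc : 0 ≤ c) : ((c : ℂ) • (1 : Matrix N N ℂ)).PosSemidef := by
  refine Matrix.posSemidef_iff_dotProduct_mulVec.mpr ⟨?_, ?_⟩
  · show ((c:ℂ) • (1 : Matrix N N ℂ))ᴴ = _
    rw [Matrix.conjTranspose_smul, Matrix.conjTranspose_one, Complex.star_def,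
      Complex.conj_ofReal]
  · intro v
    rw [Matrix.smul_mulVec, Matrix.one_mulVec, dotProduct_smul]
    have h1 : (0:ℂ) ≤ (c:ℂ) := by exact_mod_cast Complex.zero_le_real.mpr hc
    exact mul_nonneg h1 (dotProduct_star_self_nonneg v)

theorem eig_abs_le {A : Matrix N N ℂ} (hA : A.IsHermitian) {c : ℝ}
    (h1 : ((c:ℂ) • 1 - A).PosSemidef) (h2 : (A + (c:ℂ) • 1).PosSemidef) (j : N) :
    |hA.eigenvalues j| ≤ c := by
  set u : N → ℂ := ⇑(hA.eigenvectorBasis j) with hu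
  have hnorm : star u ⬝ᵥ u = 1 := by
    have h : star (hA.eigenvectorUnitary : Matrix N N ℂ) * (hA.eigenvectorUnitary : Matrix N N ℂ) = 1 :=
      Unitary.coe_star_mul_self hA.eigenvectorUnitary
    have := congrFun (congrFun h j) j
    rw [Matrix.mul_apply] at this
    simpa [dotProduct, Matrix.star_apply, Matrix.one_apply,
      Matrix.IsHermitian.eigenvectorUnitary_apply, mul_comm] using this
  have hAu : A *ᵥ u = (hA.eigenvalues j : ℂ) • u := by
    rw [hu, hA.mulVec_eigenvectorBasis]
    ext x
    simp [Complex.real_smul]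
  have q1 := h1.dotProduct_mulVec_nonneg u
  have q2 := h2.dotProduct_mulVec_nonneg u
  rw [Matrix.sub_mulVec, Matrix.smul_mulVec, Matrix.one_mulVec, hAu,
    dotProduct_sub, dotProduct_smul, dotProduct_smul, hnorm] at q1
  rw [Matrix.add_mulVec, Matrix.smul_mulVec, Matrix.one_mulVec, hAu,
    dotProduct_add, dotProduct_smul, dotProduct_smul, hnorm] at q2
  simp only [smul_eq_mul, mul_one] at q1 q2
  have r1 : (0:ℝ) ≤ c - hA.eigenvalues j := by
    have : ((c - hA.eigenvalues j : ℝ) : ℂ) = (c:ℂ) - (hA.eigenvalues j : ℂ) := by push_cast; ring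
    exact_mod_cast Complex.zero_le_real.mp (by rw [this]; exact q1)
  have r2 : (0:ℝ) ≤ hA.eigenvalues j + c := by
    have : ((hA.eigenvalues j + c : ℝ) : ℂ) = (hA.eigenvalues j : ℂ) + (c:ℂ) := by push_cast; ring
    exact_mod_cast Complex.zero_le_real.mp (by rw [this]; exact q2)
  rw [abs_le]; constructor <;> linarith
end P2

section tensor2
variable {ι κ : Type*} [Fintype ι] [Fintype κ] [DecidableEq ι] [DecidableEq κ] {n : ℕ}
variable {A : Fin n → Matrix (ι × κ) (ι × κ) ℂ}

theorem mtprod_psd (h : ∀ i, (A i).PosSemidef) : (mtprod A).PosSemidef := by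
  rw [mtprod_decomp A (fun i => (h i).1)]
  exact W_psd _ _ fun f => Finset.prod_nonneg fun i _ => (h i).eigenvalues_nonneg _

theorem smul_one_sub_mtprod_psd (hA : ∀ i, (A i).IsHermitian) (c : Fin n → ℝ)
    (hc0 : ∀ i, 0 ≤ c i) (hc : ∀ i j, |(hA i).eigenvalues j| ≤ c i) :
    (((∏ i, c i : ℝ) : ℂ) • 1 - mtprod A).PosSemidef ∧
    (mtprod A + ((∏ i, c i : ℝ) : ℂ) • 1).PosSemidef := by
  have bound : ∀ f : Fin n → ι × κ, |∏ i, (hA i).eigenvalues (f i)| ≤ ∏ i, c i := by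
    intro f
    rw [Finset.abs_prod]
    exact Finset.prod_le_prod (fun i _ => abs_nonneg _) (fun i _ => hc i (f i))
  constructor
  · have e : (((∏ i, c i : ℝ) : ℂ) • 1 - mtprod A) = Matrix.of fun x y =>
        ∑ f : Fin n → ι × κ, (((∏ i, c i) - ∏ i, (hA i).eigenvalues (f i) : ℝ) : ℂ)
          * (Wfam A hA f x * star (Wfam A hA f y)) := by
      rw [mtprod_decomp A hA, one_decomp A hA]
      ext x y
      simp only [Matrix.sub_apply, Matrix.smul_apply, Matrix.of_apply, smul_eq_mul,
        Finset.mul_sum, ← Finset.sum_sub_distrib]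
      refine Finset.sum_congr rfl fun f _ => ?_
      push_cast
      ring
    rw [e]
    exact W_psd _ _ fun f => sub_nonneg.mpr (le_of_abs_le (bound f))
  · have e : (mtprod A + ((∏ i, c i : ℝ) : ℂ) • 1) = Matrix.of fun x y =>
        ∑ f : Fin n → ι × κ, (((∏ i, (hA i).eigenvalues (f i)) + ∏ i, c i : ℝ) : ℂ)
          * (Wfam A hA f x * star (Wfam A hA f y)) := by
      rw [mtprod_decomp A hA, one_decomp A hA]
      ext x y
      simp only [Matrix.add_apply, Matrix.smul_apply, Matrix.of_apply, smul_eq_mul,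
        Finset.mul_sum, ← Finset.sum_add_distrib]
      refine Finset.sum_congr rfl fun f _ => ?_
      push_cast
      ring
    rw [e]
    exact W_psd _ _ fun f => by linarith [neg_abs_le (∏ i, (hA i).eigenvalues (f i)), bound f]
end tensor2

section traces
variable {ι κ : Type*} [Fintype ι] [Fintype κ] [DecidableEq ι] [DecidableEq κ] {n : ℕ}

theorem trace_mul_entries {ν : Type*} [Fintype ν] (A B : Matrix ν ν ℂ) :
    (A * B).trace = ∑ z : ν × ν, A z.1 z.2 * B z.2 z.1 := by
  rw [Matrix.trace, Fintype.sum_prod_type]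
  exact Finset.sum_congr rfl fun x _ => by rw [Matrix.diag, Matrix.mul_apply]

/-- the regrouping equivalence -/
def regroup {n : ℕ} : (Fin n → (ι × κ) × (ι × κ)) ≃ (((Fin n → ι) × (Fin n → κ)) × ((Fin n → ι) × (Fin n → κ))) where
  toFun g := ((fun i => (g i).1.1, fun i => (g i).1.2), (fun i => (g i).2.1, fun i => (g i).2.2))
  invFun p := fun i => ((p.1.1 i, p.1.2 i), (p.2.1 i, p.2.2 i))
  left_inv g := rfl
  right_inv p := rfl

theorem trace_mtprod_mul (A B : Fin n → Matrix (ι × κ) (ι × κ) ℂ) :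
    (mtprod A * mtprod B).trace = ∏ i, (A i * B i).trace := by
  rw [trace_mul_entries]
  have h1 : ∀ i : Fin n, (A i * B i).trace = ∑ z : (ι × κ) × (ι × κ), A i z.1 z.2 * B i z.2 z.1 :=
    fun i => trace_mul_entries _ _
  rw [Finset.prod_congr rfl fun i _ => h1 i]
  symm
  rw [Finset.prod_univ_sum, Fintype.piFinset_univ]
  refine Fintype.sum_equiv (regroup (n := n)) _ _ fun g => ?_
  show _ = mtprod A _ _ * mtprod B _ _
  rw [mtprod, mtprod]
  show _ = (∏ i, A i ((g i).1.1, (g i).1.2) ((g i).2.1, (g i).2.2)) * ∏ i, B i ((g i).2.1, (g i).2.2) ((g i).1.1, (g i).1.2)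
  rw [← Finset.prod_mul_distrib]

theorem prod_one_entry (x y : (Fin n → ι) × (Fin n → κ)) :
    ∏ i, (1 : Matrix (ι × κ) (ι × κ) ℂ) (x.1 i, x.2 i) (y.1 i, y.2 i)
      = (1 : Matrix ((Fin n → ι) × (Fin n → κ)) ((Fin n → ι) × (Fin n → κ)) ℂ) x y := by
  by_cases h : x = y
  · subst h; simp [Matrix.one_apply]
  · have hex : ∃ i : Fin n, (x.1 i, x.2 i) ≠ (y.1 i, y.2 i) := by
      by_contra hc
      push_neg at hc
      exact h (Prod.ext (funext fun i => congrArg Prod.fst (hc i))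
        (funext fun i => congrArg Prod.snd (hc i)))
    obtain ⟨i, hi⟩ := hex
    rw [Finset.prod_eq_zero (Finset.mem_univ i) (by simp [Matrix.one_apply, hi]),
      Matrix.one_apply_ne h]

theorem mtprod_one : mtprod (fun _ : Fin n => (1 : Matrix (ι × κ) (ι × κ) ℂ)) = 1 := by
  ext x y
  exact prod_one_entry x y

theorem trace_mtprod (A : Fin n → Matrix (ι × κ) (ι × κ) ℂ) :
    (mtprod A).trace = ∏ i, (A i).trace := by
  have h : (mtprod A).trace = (mtprod A * mtprod (fun _ => (1 : Matrix (ι × κ) (ι × κ) ℂ))).trace := by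
    rw [mtprod_one, Matrix.mul_one]
  rw [h, trace_mtprod_mul]
  exact Finset.prod_congr rfl fun i _ => by rw [Matrix.mul_one]
end traces

/-- `n`-fold tensor power of a bipartite matrix, regrouped as a bipartite matrix. -/
def tpow {ι κ : Type*} (ρ : Matrix (ι × κ) (ι × κ) ℂ) (n : ℕ) :
    Matrix ((Fin n → ι) × (Fin n → κ)) ((Fin n → ι) × (Fin n → κ)) ℂ :=
  fun x y => ∏ i, ρ (x.1 i, x.2 i) (y.1 i, y.2 i)

/-- p.p.t. distillable entanglement. -/
def DGamma {ι κ : Type*} [Fintype ι] [Fintype κ] [DecidableEq ι] [DecidableEq κ]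
    (ρ : Matrix (ι × κ) (ι × κ) ℂ) : ℝ :=
  sSup {r : ℝ | 0 ≤ r ∧
    Tendsto (fun n : ℕ => FGamma (tpow ρ n) ((⌊(2 : ℝ) ^ (r * (n : ℝ))⌋ : ℤ) : ℝ))
      atTop (nhds 1)}

/-- The largest eigenvalue of `|A|` for a Hermitian matrix `A`,
i.e. the largest absolute value of an eigenvalue of `A`. -/
def maxAbsEig {n : Type*} [Fintype n] [DecidableEq n] (A : Matrix n n ℂ) : ℝ :=
  if h : A.IsHermitian then ⨆ i, |h.eigenvalues i| else 0


section ptransfacts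
variable {ι κ : Type*} [Fintype ι] [Fintype κ] [DecidableEq ι] [DecidableEq κ] {n : ℕ}

theorem ptrans_mtprod (A : Fin n → Matrix (ι × κ) (ι × κ) ℂ) :
    ptrans (mtprod A) = mtprod (fun i => ptrans (A i)) := rfl

theorem ptrans_one : ptrans (1 : Matrix (ι × κ) (ι × κ) ℂ) = 1 := by
  ext x y
  simp only [ptrans, Matrix.one_apply]
  by_cases h : x = y
  · subst h; simp
  · rw [if_neg h, if_neg]
    intro hc
    injection hc with h1 h2
    exact h (Prod.ext h1 h2.symm)

theorem ptrans_sum {α : Type*} (s : Finset α) (M : α → Matrix (ι × κ) (ι × κ) ℂ) :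
    ptrans (∑ a ∈ s, M a) = ∑ a ∈ s, ptrans (M a) := by
  ext x y
  simp [ptrans, Matrix.sum_apply]

theorem ptrans_isHermitian {M : Matrix (ι × κ) (ι × κ) ℂ} (hM : M.IsHermitian) :
    (ptrans M).IsHermitian := by
  ext x y
  have := congrFun (congrFun hM (x.1, y.2)) (y.1, x.2)
  simpa [ptrans, Matrix.conjTranspose_apply] using this

/-- the swap equivalence used for partial transpose sums -/
def ptswap : ((ι × κ) × (ι × κ)) ≃ ((ι × κ) × (ι × κ)) where
  toFun z := ((z.1.1, z.2.2), (z.2.1, z.1.2))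
  invFun z := ((z.1.1, z.2.2), (z.2.1, z.1.2))
  left_inv z := rfl
  right_inv z := rfl

theorem trace_ptrans_mul (A B : Matrix (ι × κ) (ι × κ) ℂ) :
    (ptrans A * ptrans B).trace = (A * B).trace := by
  rw [trace_mul_entries, trace_mul_entries]
  refine Fintype.sum_equiv ptswap _ _ fun z => rfl
end ptransfacts

section eigtrace
variable {ν : Type*} [Fintype ν] [DecidableEq ν]

theorem trace_eq_sum_eigen {M : Matrix ν ν ℂ} (hM : M.IsHermitian) :
    M.trace = ((∑ j, hM.eigenvalues j : ℝ) : ℂ) := by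
  conv_lhs => rw [hM.spectral_theorem, Unitary.conjStarAlgAut_apply]
  rw [Matrix.trace_mul_cycle]
  rw [show (star (hM.eigenvectorUnitary : Matrix ν ν ℂ)) * (hM.eigenvectorUnitary : Matrix ν ν ℂ) = 1 from
    Unitary.coe_star_mul_self hM.eigenvectorUnitary]
  rw [Matrix.one_mul, Matrix.trace_diagonal]
  push_cast
  rfl


theorem mul_self_trace {M : Matrix ν ν ℂ} (hM : M.IsHermitian) :
    (M * M).trace = ((∑ j, (hM.eigenvalues j)^2 : ℝ) : ℂ) := by
  set U := (hM.eigenvectorUnitary : Matrix ν ν ℂ) with hU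
  have hstar : star U * U = 1 := Unitary.coe_star_mul_self hM.eigenvectorUnitary
  have key : M * M = U * (Matrix.diagonal (RCLike.ofReal ∘ hM.eigenvalues)
      * (Matrix.diagonal (RCLike.ofReal ∘ hM.eigenvalues) * star U)) := by
    conv_lhs => rw [hM.spectral_theorem, Unitary.conjStarAlgAut_apply]
    simp only [Matrix.mul_assoc, ← hU]
    rw [← Matrix.mul_assoc (star U) U, hstar, Matrix.one_mul]
  rw [key, Matrix.trace_mul_comm]
  simp only [Matrix.mul_assoc]
  rw [hstar, Matrix.mul_one, Matrix.diagonal_mul_diagonal, Matrix.trace_diagonal]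
  push_cast
  refine Finset.sum_congr rfl fun j _ => ?_
  simp [pow_two]

def frobSq (M : Matrix ν ν ℂ) : ℝ := ∑ z : ν × ν, Complex.normSq (M z.1 z.2)

theorem frobSq_eq_trace (M : Matrix ν ν ℂ) : ((frobSq M : ℝ) : ℂ) = (M * Mᴴ).trace := by
  rw [trace_mul_entries, frobSq]
  push_cast
  refine Finset.sum_congr rfl fun z _ => ?_
  rw [Matrix.conjTranspose_apply, Complex.star_def, Complex.mul_conj]

theorem frobSq_herm {M : Matrix ν ν ℂ} (hM : M.IsHermitian) :
    frobSq M = ∑ j, (hM.eigenvalues j)^2 := by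
  have h := frobSq_eq_trace M
  rw [show Mᴴ = M from hM, mul_self_trace hM] at h
  exact_mod_cast h

theorem trace_mul_norm_le (A B : Matrix ν ν ℂ) :
    ‖(A * B).trace‖ ≤ Real.sqrt (frobSq A) * Real.sqrt (frobSq B) := by
  rw [trace_mul_entries]
  have h1 : ‖∑ z : ν × ν, A z.1 z.2 * B z.2 z.1‖ ≤ ∑ z : ν × ν, ‖A z.1 z.2‖ * ‖B z.2 z.1‖ := by
    refine le_trans (norm_sum_le _ _) ?_
    exact Finset.sum_le_sum fun z _ => by rw [norm_mul]
  refine le_trans h1 ?_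
  have h2 : (∑ z : ν × ν, ‖A z.1 z.2‖ * ‖B z.2 z.1‖)^2 ≤
      (∑ z : ν × ν, ‖A z.1 z.2‖^2) * (∑ z : ν × ν, ‖B z.2 z.1‖^2) :=
    Finset.sum_mul_sq_le_sq_mul_sq _ _ _
  have hfa : ∑ z : ν × ν, ‖A z.1 z.2‖^2 = frobSq A := by
    rw [frobSq]
    exact Finset.sum_congr rfl fun z _ => by rw [← Complex.sq_norm]
  have hfb : ∑ z : ν × ν, ‖B z.2 z.1‖^2 = frobSq B := by
    rw [frobSq]
    refine Fintype.sum_equiv (Equiv.prodComm ν ν) _ _ fun z => ?_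
    rw [← Complex.sq_norm]; rfl
  rw [hfa, hfb] at h2
  have h3 : 0 ≤ ∑ z : ν × ν, ‖A z.1 z.2‖ * ‖B z.2 z.1‖ :=
    Finset.sum_nonneg fun z _ => mul_nonneg (norm_nonneg _) (norm_nonneg _)
  calc ∑ z : ν × ν, ‖A z.1 z.2‖ * ‖B z.2 z.1‖
      = Real.sqrt ((∑ z : ν × ν, ‖A z.1 z.2‖ * ‖B z.2 z.1‖)^2) := by
        rw [Real.sqrt_sq h3]
    _ ≤ Real.sqrt (frobSq A * frobSq B) := Real.sqrt_le_sqrt h2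
    _ = Real.sqrt (frobSq A) * Real.sqrt (frobSq B) := Real.sqrt_mul
        (Finset.sum_nonneg fun z _ => Complex.normSq_nonneg _) _

theorem psd_diag_nonneg {M : Matrix ν ν ℂ} (hM : M.PosSemidef) (x : ν) :
    (0:ℂ) ≤ M x x := by
  have h := hM.dotProduct_mulVec_nonneg (Pi.single x 1)
  have e : star (Pi.single x 1 : ν → ℂ) ⬝ᵥ (M *ᵥ Pi.single x 1) = M x x := by
    simp [dotProduct, Pi.single_apply, apply_ite, Matrix.mulVec]
  rwa [e] at h

theorem psd_trace_real {M : Matrix ν ν ℂ} (hM : M.PosSemidef) :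
    ∃ t : ℝ, 0 ≤ t ∧ M.trace = (t:ℂ) := by
  have h : (0:ℂ) ≤ M.trace := Finset.sum_nonneg fun x _ => psd_diag_nonneg hM x
  obtain ⟨h1, h2⟩ := Complex.le_def.mp h
  refine ⟨M.trace.re, by simpa using h1, ?_⟩
  rw [Complex.ext_iff]
  exact ⟨by simp, by simp [← h2]⟩

open scoped MatrixOrder in
theorem psd_mul_trace {A B : Matrix ν ν ℂ} (hA : A.PosSemidef) (hB : B.PosSemidef) :
    ∃ t : ℝ, 0 ≤ t ∧ (A * B).trace = (t:ℂ) := by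
  have hs : CFC.sqrt A * CFC.sqrt A = A := CFC.sqrt_mul_sqrt_self A hA.nonneg
  have h1 : (CFC.sqrt A * B * CFC.sqrt A).PosSemidef := by
    have := hB.mul_mul_conjTranspose_same (CFC.sqrt A)
    rwa [show (CFC.sqrt A)ᴴ = CFC.sqrt A from (CFC.sqrt_nonneg A).posSemidef.1] at this
  have h2 : (A * B).trace = (CFC.sqrt A * B * CFC.sqrt A).trace := by
    conv_lhs => rw [← hs]
    rw [Matrix.mul_assoc, Matrix.trace_mul_comm]
  rw [h2]
  exact psd_trace_real h1

theorem trace_herm_idem_psd {P ρ : Matrix ν ν ℂ} (hP : P.IsHermitian) (hPP : P * P = P)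
    (hρ : ρ.PosSemidef) : ∃ t : ℝ, 0 ≤ t ∧ (P * ρ).trace = (t:ℂ) := by
  have h1 : (P * ρ * Pᴴ).PosSemidef := hρ.mul_mul_conjTranspose_same P
  rw [show Pᴴ = P from hP] at h1
  obtain ⟨t, ht, htr⟩ := psd_trace_real h1
  refine ⟨t, ht, ?_⟩
  rw [← htr]
  have hc : (P * ρ * P).trace = (P * P * ρ).trace := Matrix.trace_mul_cycle P ρ P
  rw [hc, hPP]
end eigtrace

theorem frobSq_ptrans {ι κ : Type*} [Fintype ι] [Fintype κ] (M : Matrix (ι × κ) (ι × κ) ℂ) :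
    frobSq (ptrans M) = frobSq M := by
  rw [frobSq, frobSq]
  exact Fintype.sum_equiv ptswap _ _ fun z => rfl

section maxabs
variable {ν : Type*} [Fintype ν] [DecidableEq ν]

theorem eig_le_maxAbsEig {M : Matrix ν ν ℂ} (hM : M.IsHermitian) (j : ν) :
    |hM.eigenvalues j| ≤ maxAbsEig M := by
  rw [maxAbsEig, dif_pos hM]
  exact le_ciSup (f := fun i => |hM.eigenvalues i|) (Set.Finite.bddAbove (Set.finite_range _)) j

theorem maxAbsEig_pos {M : Matrix ν ν ℂ} (hM : M.IsHermitian) (hMne : M ≠ 0) :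
    0 < maxAbsEig M := by
  by_contra hc
  push_neg at hc
  have hz : ∀ j, hM.eigenvalues j = 0 := fun j =>
    abs_eq_zero.mp (le_antisymm (le_trans (eig_le_maxAbsEig hM j) hc) (abs_nonneg _))
  refine hMne ?_
  ext x y
  rw [herm_entry hM x y]
  simp [hz]
end maxabs

section fgamma
variable {ι κ : Type*} [Fintype ι] [Fintype κ] [DecidableEq ι] [DecidableEq κ]

theorem fgamma_elem_le_one {ρ : Matrix (ι × κ) (ι × κ) ℂ} (hρ : ρ.PosSemidef)
    (htr : ρ.trace = 1) {K : ℝ} {x : ℝ}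
    (hx : x ∈ {x : ℝ | ∃ F : Matrix (ι × κ) (ι × κ) ℂ,
      F.PosSemidef ∧ (1 - F).PosSemidef ∧
      (((1 / K : ℝ) : ℂ) • 1 - ptrans F).PosSemidef ∧
      (ptrans F + ((1 / K : ℝ) : ℂ) • 1).PosSemidef ∧
      x = ((F * ρ).trace).re}) : x ≤ 1 := by
  obtain ⟨F, hF, h1F, _, _, rfl⟩ := hx
  obtain ⟨t, ht, htr'⟩ := psd_mul_trace h1F hρ
  have expand : ((1 - F) * ρ).trace = ρ.trace - (F * ρ).trace := by
    rw [Matrix.sub_mul, Matrix.one_mul, Matrix.trace_sub]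
  have hFtr : (F * ρ).trace = 1 - (t:ℂ) := by
    rw [expand, htr] at htr'
    linear_combination -htr'
  rw [hFtr]
  simp only [Complex.sub_re, Complex.one_re, Complex.ofReal_re]
  linarith

theorem fgamma_le_one {ρ : Matrix (ι × κ) (ι × κ) ℂ} (hρ : ρ.PosSemidef)
    (htr : ρ.trace = 1) (K : ℝ) : FGamma ρ K ≤ 1 :=
  Real.sSup_le (fun _ hx => fgamma_elem_le_one hρ htr hx) zero_le_one

theorem fgamma_bddAbove {ρ : Matrix (ι × κ) (ι × κ) ℂ} (hρ : ρ.PosSemidef)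
    (htr : ρ.trace = 1) (K : ℝ) : BddAbove {x : ℝ | ∃ F : Matrix (ι × κ) (ι × κ) ℂ,
      F.PosSemidef ∧ (1 - F).PosSemidef ∧
      (((1 / K : ℝ) : ℂ) • 1 - ptrans F).PosSemidef ∧
      (ptrans F + ((1 / K : ℝ) : ℂ) • 1).PosSemidef ∧
      x = ((F * ρ).trace).re} :=
  ⟨1, fun _ hx => fgamma_elem_le_one hρ htr hx⟩

theorem fgamma_le_frob {ρ : Matrix (ι × κ) (ι × κ) ℂ} (hρ : ρ.PosSemidef)
    (htr : ρ.trace = 1) {K : ℝ} (hK : 0 < K) :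
    FGamma ρ K ≤ Real.sqrt (Fintype.card (ι × κ)) / K := by
  refine Real.sSup_le ?_ (by positivity)
  rintro x ⟨F, hF, h1F, hpt1, hpt2, rfl⟩
  have hptF : (ptrans F).IsHermitian := ptrans_isHermitian hF.1
  have heig : ∀ j, |hptF.eigenvalues j| ≤ 1 / K := fun j => eig_abs_le hptF hpt1 hpt2 j
  have hfrobF : frobSq (ptrans F) ≤ (Fintype.card (ι × κ)) * (1/K)^2 := by
    rw [frobSq_herm hptF]
    calc ∑ j, (hptF.eigenvalues j)^2 ≤ ∑ _j : ι × κ, (1/K)^2 := by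
          refine Finset.sum_le_sum fun j _ => ?_
          rw [← sq_abs]
          exact pow_le_pow_left₀ (abs_nonneg _) (heig j) 2
      _ = (Fintype.card (ι × κ)) * (1/K)^2 := by
          rw [Finset.sum_const, Finset.card_univ, nsmul_eq_mul]
  have hfrobρ : frobSq (ptrans ρ) ≤ 1 := by
    rw [frobSq_ptrans, frobSq_herm hρ.1]
    have hsum : ∑ j, hρ.1.eigenvalues j = 1 := by
      have := trace_eq_sum_eigen hρ.1
      rw [htr] at this
      exact_mod_cast this.symm
    calc ∑ j, (hρ.1.eigenvalues j)^2 ≤ ∑ j, (hρ.1.eigenvalues j) * 1 := by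
          refine Finset.sum_le_sum fun j _ => ?_
          rw [pow_two]
          refine mul_le_mul_of_nonneg_left ?_ (hρ.eigenvalues_nonneg j)
          calc hρ.1.eigenvalues j ≤ ∑ k, hρ.1.eigenvalues k :=
                Finset.single_le_sum (fun k _ => hρ.eigenvalues_nonneg k) (Finset.mem_univ j)
            _ = 1 := hsum
      _ = 1 := by simp [hsum]
  have htraceq : (F * ρ).trace = (ptrans F * ptrans ρ).trace := (trace_ptrans_mul F ρ).symm
  calc ((F * ρ).trace).re ≤ ‖(F * ρ).trace‖ := Complex.re_le_norm _
    _ = ‖(ptrans F * ptrans ρ).trace‖ := by rw [htraceq]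
    _ ≤ Real.sqrt (frobSq (ptrans F)) * Real.sqrt (frobSq (ptrans ρ)) := trace_mul_norm_le _ _
    _ ≤ Real.sqrt ((Fintype.card (ι × κ)) * (1/K)^2) * Real.sqrt 1 := by
        refine mul_le_mul (Real.sqrt_le_sqrt hfrobF) (Real.sqrt_le_sqrt hfrobρ)
          (Real.sqrt_nonneg _) (Real.sqrt_nonneg _)
    _ = Real.sqrt (Fintype.card (ι × κ)) / K := by
        rw [Real.sqrt_one, mul_one, Real.sqrt_mul (by positivity)]
        rw [Real.sqrt_sq (by positivity)]
        ring
end fgamma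

section prob
variable {m : ℕ} (p : Fin m → ℝ) (f : Fin m → ℝ)

theorem sum_prod {R : Type*} [CommSemiring R] {n : ℕ} (g : Fin n → Fin m → R) :
    ∑ a : Fin n → Fin m, ∏ i, g i (a i) = ∏ i, ∑ j, g i j := by
  rw [Finset.prod_univ_sum (t := fun _ => (Finset.univ : Finset (Fin m)))
    (f := fun i j => g i j), Fintype.piFinset_univ]

theorem mu_sum_one (hp1 : ∑ j, p j = 1) (n : ℕ) :
    ∑ a : Fin n → Fin m, ∏ i, p (a i) = 1 := by
  rw [sum_prod (fun _ j => p j)]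
  simp [hp1]

theorem second_moment (hp1 : ∑ j, p j = 1) (hmean : ∑ j, p j * f j = 0) (n : ℕ) :
    ∑ a : Fin n → Fin m, (∏ i, p (a i)) * (∑ i, f (a i))^2
      = n * (∑ j, p j * f j^2) := by
  have key : ∀ i j : Fin n, ∑ a : Fin n → Fin m, (∏ k, p (a k)) * (f (a i) * f (a j))
      = if i = j then (∑ x, p x * f x^2) else 0 := by
    intro i j
    have e : ∀ a : Fin n → Fin m, (∏ k, p (a k)) * (f (a i) * f (a j)) =
        ∏ k, (p (a k) * (if k = i then f (a k) else 1) * (if k = j then f (a k) else 1)) := by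
      intro a
      rw [Finset.prod_mul_distrib, Finset.prod_mul_distrib,
        Finset.prod_ite_eq' Finset.univ i (fun k => f (a k)),
        Finset.prod_ite_eq' Finset.univ j (fun k => f (a k))]
      simp only [Finset.mem_univ, if_true]
      ring
    rw [Finset.sum_congr rfl fun a _ => e a,
      sum_prod (fun k x => p x * (if k = i then f x else 1) * (if k = j then f x else 1))]
    by_cases hij : i = j
    · subst hij
      have h2 : ∀ k : Fin n, (∑ x, p x * (if k = i then f x else 1) * (if k = i then f x else 1))
          = if k = i then (∑ x, p x * f x^2) else 1 := by
        intro k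
        by_cases hk : k = i <;> simp [hk, hp1, pow_two, mul_assoc]
      rw [Finset.prod_congr rfl fun k _ => h2 k, Finset.prod_ite_eq' Finset.univ i
        (fun _ => ∑ x, p x * f x^2)]
      simp
    · rw [if_neg hij]
      refine Finset.prod_eq_zero (Finset.mem_univ i) ?_
      simp only [if_pos rfl, if_neg hij]
      simpa [mul_comm] using hmean
  have expand : ∀ a : Fin n → Fin m, (∏ i, p (a i)) * (∑ i, f (a i))^2
      = ∑ i, ∑ j, (∏ k, p (a k)) * (f (a i) * f (a j)) := by
    intro a
    rw [pow_two, Finset.sum_mul_sum]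
    rw [Finset.mul_sum]
    refine Finset.sum_congr rfl fun i _ => ?_
    rw [Finset.mul_sum]
  rw [Finset.sum_congr rfl fun a _ => expand a]
  rw [show (∑ a : Fin n → Fin m, ∑ i : Fin n, ∑ j : Fin n, (∏ k, p (a k)) * (f (a i) * f (a j)))
      = ∑ i : Fin n, ∑ j : Fin n, ∑ a : Fin n → Fin m, (∏ k, p (a k)) * (f (a i) * f (a j))
    from sum_comm3' _]
  rw [Finset.sum_congr rfl fun i _ => Finset.sum_congr rfl fun j _ => key i j]
  rw [Finset.sum_congr rfl fun i (_ : i ∈ Finset.univ) => Finset.sum_ite_eq Finset.univ i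
    (fun _ => ∑ x, p x * f x^2)]
  simp [Finset.card_univ]

theorem chebyshev (hp : ∀ j, 0 ≤ p j) (hp1 : ∑ j, p j = 1) (hmean : ∑ j, p j * f j = 0)
    {n : ℕ} (hn : 1 ≤ n) {δ : ℝ} (hδ : 0 < δ) :
    ∑ a ∈ Finset.univ.filter (fun a : Fin n → Fin m => ∑ i, f (a i) ≤ -(δ * n)),
      (∏ i, p (a i)) ≤ (∑ j, p j * f j^2) / (δ^2 * n) := by
  set V := ∑ j, p j * f j^2 with hV
  set bad := Finset.univ.filter (fun a : Fin n → Fin m => ∑ i, f (a i) ≤ -(δ * n)) with hbad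
  have hμ : ∀ a : Fin n → Fin m, 0 ≤ ∏ i, p (a i) :=
    fun a => Finset.prod_nonneg fun i _ => hp (a i)
  have step1 : (δ * n)^2 * ∑ a ∈ bad, (∏ i, p (a i)) ≤ n * V := by
    calc (δ * n)^2 * ∑ a ∈ bad, (∏ i, p (a i))
        = ∑ a ∈ bad, (∏ i, p (a i)) * (δ * n)^2 := by
          rw [Finset.mul_sum]
          exact Finset.sum_congr rfl fun a _ => mul_comm _ _
      _ ≤ ∑ a ∈ bad, (∏ i, p (a i)) * (∑ i, f (a i))^2 := by
          refine Finset.sum_le_sum fun a ha => ?_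
          refine mul_le_mul_of_nonneg_left ?_ (hμ a)
          have hle : ∑ i, f (a i) ≤ -(δ * n) := (Finset.mem_filter.mp ha).2
          have hδn : (0:ℝ) ≤ δ * n := by positivity
          have h1 : (δ * n)^2 ≤ (-(∑ i, f (a i)))^2 := by
            refine sq_le_sq' (by linarith) (by linarith)
          rwa [neg_sq] at h1

      _ ≤ ∑ a : Fin n → Fin m, (∏ i, p (a i)) * (∑ i, f (a i))^2 := by
          refine Finset.sum_le_sum_of_subset_of_nonneg (Finset.filter_subset _ _) ?_
          exact fun a _ _ => mul_nonneg (hμ a) (sq_nonneg _)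
      _ = n * V := second_moment p f hp1 hmean n
  have hpos : (0:ℝ) < (δ * n)^2 := by
    have : (0:ℝ) < n := by exact_mod_cast hn
    positivity
  rw [← le_div_iff₀' hpos] at step1
  refine le_trans step1 (le_of_eq ?_)
  have hne : (n:ℝ) ≠ 0 := by
    have : (0:ℝ) < n := by exact_mod_cast hn
    linarith
  field_simp

end prob

section protocol
variable {v m : ℕ}

theorem mtprod_sum_all (P : Fin m → Matrix (Fin v × Fin v) (Fin v × Fin v) ℂ)
    (hsum : ∑ i, P i = 1) (n : ℕ) :
    ∑ a : Fin n → Fin m, mtprod (fun i => P (a i)) = 1 := by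
  ext x y
  rw [Matrix.sum_apply]
  have h1 : ∀ a : Fin n → Fin m, mtprod (fun i => P (a i)) x y
      = ∏ i, P (a i) (x.1 i, x.2 i) (y.1 i, y.2 i) := fun a => rfl
  rw [Finset.sum_congr rfl fun a _ => h1 a,
    sum_prod (fun i j => P j (x.1 i, x.2 i) (y.1 i, y.2 i))]
  have h2 : ∀ i : Fin n, ∑ j, P j (x.1 i, x.2 i) (y.1 i, y.2 i)
      = (1 : Matrix (Fin v × Fin v) (Fin v × Fin v) ℂ) (x.1 i, x.2 i) (y.1 i, y.2 i) := by
    intro i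
    rw [← hsum, Matrix.sum_apply]
  rw [Finset.prod_congr rfl fun i _ => h2 i]
  exact prod_one_entry x y

theorem floor_pow_ge_one {r : ℝ} (hr : 0 ≤ r) (n : ℕ) :
    (1:ℝ) ≤ ((⌊(2:ℝ) ^ (r * (n:ℝ))⌋ : ℤ) : ℝ) := by
  have h1 : (1:ℝ) ≤ (2:ℝ) ^ (r * (n:ℝ)) := by
    rw [show (1:ℝ) = (2:ℝ) ^ (0:ℝ) from (Real.rpow_zero 2).symm]
    exact Real.rpow_le_rpow_of_exponent_le one_le_two (by positivity)
  exact_mod_cast Int.le_floor.mpr (by exact_mod_cast h1)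
end protocol

section protocol2
variable {v m : ℕ}

theorem protocol_tendsto
    (P : Fin m → Matrix (Fin v × Fin v) (Fin v × Fin v) ℂ)
    (hPSD : ∀ i, (P i).PosSemidef) (hsum : ∑ i, P i = 1)
    (ρ : Matrix (Fin v × Fin v) (Fin v × Fin v) ℂ) (hρ : ρ.PosSemidef) (hρtr : ρ.trace = 1)
    (p s : Fin m → ℝ)
    (htrP : ∀ i, (P i * ρ).trace = (p i : ℂ))
    (hp : ∀ i, 0 ≤ p i) (hp1 : ∑ i, p i = 1)
    (hspos : ∀ i, 0 < p i → 0 < s i)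
    (hptherm : ∀ i, (ptrans (P i)).IsHermitian)
    (hseig : ∀ i j, |(hptherm i).eigenvalues j| ≤ s i)
    (L δ : ℝ) (hL : L = ∑ i, p i * (Real.logb 2 (p i) - Real.logb 2 (s i)))
    (hδ : 0 < δ) (hLδ : 0 < L - δ) :
    Tendsto (fun n : ℕ => FGamma (tpow ρ n) ((⌊(2:ℝ) ^ ((L - δ) * (n:ℝ))⌋ : ℤ) : ℝ))
      atTop (nhds 1) := by
  classical
  have htpow_psd : ∀ n : ℕ, (tpow ρ n).PosSemidef := fun n =>
    mtprod_psd (A := fun _ : Fin n => ρ) (fun _ => hρ)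
  have htpow_tr : ∀ n : ℕ, (tpow ρ n).trace = 1 := by
    intro n
    have : tpow ρ n = mtprod (fun _ : Fin n => ρ) := rfl
    rw [this, trace_mtprod]
    simp [hρtr]
  set r := L - δ with hr
  set f : Fin m → ℝ :=
    fun i => if 0 < p i then Real.logb 2 (p i) - Real.logb 2 (s i) - L else 0 with hf
  have hmean : ∑ i, p i * f i = 0 := by
    have h1 : ∀ i, p i * f i = p i * (Real.logb 2 (p i) - Real.logb 2 (s i)) - L * p i := by
      intro i
      by_cases hi : 0 < p i
      · simp only [hf, if_pos hi]; ring
      · have hz : p i = 0 := le_antisymm (not_lt.mp hi) (hp i)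
        simp [hz, hf]
    rw [Finset.sum_congr rfl fun i _ => h1 i, Finset.sum_sub_distrib, ← Finset.mul_sum, hp1, ← hL]
    ring
  set V := ∑ i, p i * f i ^ 2 with hV
  have key : ∀ n : ℕ, 1 ≤ n →
      1 - V / (δ^2 * n) ≤ FGamma (tpow ρ n) ((⌊(2:ℝ)^(r * (n:ℝ))⌋:ℤ):ℝ) := by
    intro n hn
    set K : ℝ := ((⌊(2:ℝ)^(r * (n:ℝ))⌋:ℤ):ℝ) with hK
    have hK1 : 1 ≤ K := floor_pow_ge_one hLδ.le n
    have hKpos : 0 < K := lt_of_lt_of_le zero_lt_one hK1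
    have hKle : K ≤ (2:ℝ)^(r * (n:ℝ)) := Int.floor_le _
    set T : Finset (Fin n → Fin m) := Finset.univ.filter
      (fun a => (∀ i, 0 < p (a i)) ∧ -(δ * n) < ∑ i, f (a i)) with hT
    have hTs : ∀ a ∈ T, ∀ i, 0 ≤ s (a i) := fun a ha i =>
      (hspos _ ((Finset.mem_filter.mp ha).2.1 i)).le
    -- bound on the sum of s-products
    have hsa : ∀ a ∈ T, (∏ i, s (a i)) ≤ (∏ i, p (a i)) * (2:ℝ)^((δ - L) * n) := by
      intro a ha
      obtain ⟨hpos, hfs⟩ := (Finset.mem_filter.mp ha).2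
      have hps : ∀ i, s (a i) = p (a i) * (2:ℝ)^(-(f (a i) + L)) := by
        intro i
        have hpi := hpos i
        have hsi := hspos _ hpi
        have hfi : f (a i) + L = Real.logb 2 (p (a i)) - Real.logb 2 (s (a i)) := by
          simp only [hf, if_pos hpi]; ring
        rw [hfi, neg_sub, Real.rpow_sub two_pos, Real.rpow_logb two_pos (by norm_num) hsi,
          Real.rpow_logb two_pos (by norm_num) hpi]
        field_simp
      calc ∏ i, s (a i) = ∏ i, (p (a i) * (2:ℝ)^(-(f (a i) + L))) :=
            Finset.prod_congr rfl fun i _ => hps i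
        _ = (∏ i, p (a i)) * (2:ℝ)^(∑ i, -(f (a i) + L)) := by
            rw [Finset.prod_mul_distrib, Real.rpow_sum_of_pos two_pos]
        _ ≤ (∏ i, p (a i)) * (2:ℝ)^((δ - L) * n) := by
            refine mul_le_mul_of_nonneg_left ?_
              (Finset.prod_nonneg fun i _ => hp (a i))
            refine Real.rpow_le_rpow_of_exponent_le one_le_two ?_
            have hsumneg : ∑ i : Fin n, -(f (a i) + L) = -(∑ i, f (a i)) - n * L := by
              rw [Finset.sum_congr rfl fun i (_ : i ∈ Finset.univ) => neg_add (f (a i)) L,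
                Finset.sum_add_distrib]
              simp [Finset.sum_const, Finset.card_univ]
              ring
            rw [hsumneg]
            nlinarith [hfs]
    have hsumP_le_one : ∑ a ∈ T, ∏ i, p (a i) ≤ 1 := by
      rw [← mu_sum_one p hp1 n]
      exact Finset.sum_le_sum_of_subset_of_nonneg (Finset.filter_subset _ _)
        (fun a _ _ => Finset.prod_nonneg fun i _ => hp (a i))
    have hsumP_nonneg : 0 ≤ ∑ a ∈ T, ∏ i, p (a i) :=
      Finset.sum_nonneg fun a _ => Finset.prod_nonneg fun i _ => hp (a i)
    have hsbound : ∑ a ∈ T, (∏ i, s (a i)) ≤ 1 / K := by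
      have hC : (0:ℝ) ≤ (2:ℝ)^((δ - L) * n) := (Real.rpow_pos_of_pos two_pos _).le
      calc ∑ a ∈ T, (∏ i, s (a i)) ≤ ∑ a ∈ T, (∏ i, p (a i)) * (2:ℝ)^((δ - L) * n) :=
            Finset.sum_le_sum hsa
        _ = (∑ a ∈ T, ∏ i, p (a i)) * (2:ℝ)^((δ - L) * n) := (Finset.sum_mul _ _ _).symm
        _ ≤ 1 * (2:ℝ)^((δ - L) * n) := mul_le_mul_of_nonneg_right hsumP_le_one hC
        _ = (2:ℝ)^(-(r * (n:ℝ))) := by rw [one_mul, hr]; ring_nf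
        _ = 1 / (2:ℝ)^(r * (n:ℝ)) := by
            rw [Real.rpow_neg (by norm_num), one_div]
        _ ≤ 1 / K := one_div_le_one_div_of_le hKpos hKle
    set S1 : ℝ := ∑ a ∈ T, (∏ i, s (a i)) with hS1
    have hS1nn : 0 ≤ S1 :=
      Finset.sum_nonneg fun a ha => Finset.prod_nonneg fun i _ => hTs a ha i
    set F : Matrix ((Fin n → Fin v) × (Fin n → Fin v)) ((Fin n → Fin v) × (Fin n → Fin v)) ℂ :=
      ∑ a ∈ T, mtprod (fun i => P (a i)) with hF
    have hFpsd : F.PosSemidef := psd_sum _ _ fun a _ => mtprod_psd (fun i => hPSD (a i))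
    have h1Fpsd : ((1:Matrix _ _ ℂ) - F).PosSemidef := by
      have hcompl : (1:Matrix _ _ ℂ) - F = ∑ a ∈ Tᶜ, mtprod (fun i => P (a i)) := by
        rw [← mtprod_sum_all P hsum n, ← Finset.sum_add_sum_compl T
          (fun a => mtprod (fun i => P (a i))), hF]
        exact add_sub_cancel_left _ _
      rw [hcompl]
      exact psd_sum _ _ fun a _ => mtprod_psd (fun i => hPSD (a i))
    have hptF : ptrans F = ∑ a ∈ T, mtprod (fun i => ptrans (P (a i))) := by
      rw [hF, ptrans_sum]
      exact Finset.sum_congr rfl fun a _ => ptrans_mtprod _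
    have hcast : (∑ a ∈ T, (((∏ i, s (a i) : ℝ)):ℂ)) = ((S1:ℝ):ℂ) := by
      rw [hS1]; push_cast; rfl
    have hsplit : (((1/K:ℝ)):ℂ) = (((1/K - S1:ℝ)):ℂ) + ((S1:ℝ):ℂ) := by push_cast; ring
    have c3 : ((((1/K:ℝ)):ℂ) • 1 - ptrans F).PosSemidef := by
      have hid : (((1/K:ℝ)):ℂ) • (1 : Matrix _ _ ℂ) - ptrans F
          = (((1/K - S1:ℝ)):ℂ) • 1 + ∑ a ∈ T,
            ((((∏ i, s (a i) : ℝ)):ℂ) • 1 - mtprod (fun i => ptrans (P (a i)))) := by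
        rw [hptF, Finset.sum_sub_distrib, ← Finset.sum_smul, hcast, hsplit, add_smul]
        abel
      rw [hid]
      refine psd_add (psd_smul_one (by linarith)) (psd_sum _ _ fun a ha => ?_)
      exact (smul_one_sub_mtprod_psd (fun i => hptherm (a i)) (fun i => s (a i))
        (fun i => hTs a ha i) (fun i j => hseig (a i) j)).1
    have c4 : (ptrans F + (((1/K:ℝ)):ℂ) • 1).PosSemidef := by
      have hid : ptrans F + (((1/K:ℝ)):ℂ) • (1 : Matrix _ _ ℂ)
          = (((1/K - S1:ℝ)):ℂ) • 1 + ∑ a ∈ T,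
            (mtprod (fun i => ptrans (P (a i))) + (((∏ i, s (a i) : ℝ)):ℂ) • 1) := by
        rw [hptF, Finset.sum_add_distrib, ← Finset.sum_smul, hcast, hsplit, add_smul]
        abel
      rw [hid]
      refine psd_add (psd_smul_one (by linarith)) (psd_sum _ _ fun a ha => ?_)
      exact (smul_one_sub_mtprod_psd (fun i => hptherm (a i)) (fun i => s (a i))
        (fun i => hTs a ha i) (fun i j => hseig (a i) j)).2
    have htrF : (F * tpow ρ n).trace = ((∑ a ∈ T, ∏ i, p (a i) : ℝ) : ℂ) := by
      rw [hF, Finset.sum_mul, Matrix.trace_sum]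
      have h1 : ∀ a : Fin n → Fin m,
          (mtprod (fun i => P (a i)) * tpow ρ n).trace = ((∏ i, p (a i) : ℝ):ℂ) := by
        intro a
        have he : tpow ρ n = mtprod (fun _ : Fin n => ρ) := rfl
        rw [he, trace_mtprod_mul, Finset.prod_congr rfl fun i _ => htrP (a i)]
        push_cast
        rfl
      rw [Finset.sum_congr rfl fun a _ => h1 a]
      push_cast
      rfl
    have hmem : (∑ a ∈ T, ∏ i, p (a i)) ∈ {x : ℝ | ∃ G : Matrix ((Fin n → Fin v) × (Fin n → Fin v)) ((Fin n → Fin v) × (Fin n → Fin v)) ℂ,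
        G.PosSemidef ∧ (1 - G).PosSemidef ∧
        (((1 / K : ℝ) : ℂ) • 1 - ptrans G).PosSemidef ∧
        (ptrans G + ((1 / K : ℝ) : ℂ) • 1).PosSemidef ∧
        (∑ a ∈ T, ∏ i, p (a i)) = ((G * tpow ρ n).trace).re} :=
      ⟨F, hFpsd, h1Fpsd, c3, c4, by rw [htrF, Complex.ofReal_re]⟩
    have hx_le : (∑ a ∈ T, ∏ i, p (a i)) ≤ FGamma (tpow ρ n) K :=
      le_csSup (fgamma_bddAbove (htpow_psd n) (htpow_tr n) K) hmem
    -- Chebyshev lower bound on the T-probability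
    have hccomp : 1 - (∑ a ∈ T, ∏ i, p (a i)) = ∑ a ∈ Tᶜ, ∏ i, p (a i) := by
      rw [← mu_sum_one p hp1 n, ← Finset.sum_add_sum_compl T (fun a => ∏ i, p (a i))]
      ring
    have hcompl_le : (∑ a ∈ Tᶜ, ∏ i, p (a i)) ≤
        ∑ a ∈ Finset.univ.filter (fun a : Fin n → Fin m => ∑ i, f (a i) ≤ -(δ * n)),
          ∏ i, p (a i) := by
      have hstep : (∑ a ∈ Tᶜ, ∏ i, p (a i)) =
          ∑ a ∈ Tᶜ.filter (fun a => ∑ i, f (a i) ≤ -(δ * n)), ∏ i, p (a i) := by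
        refine (Finset.sum_subset (Finset.filter_subset _ _) ?_).symm
        intro a haTc hanot
        have hgt : ¬ (∑ i, f (a i) ≤ -(δ * n)) := by
          intro hcon
          exact hanot (Finset.mem_filter.mpr ⟨haTc, hcon⟩)
        have hnotT : a ∉ T := Finset.mem_compl.mp haTc
        have hnpos : ¬ (∀ i, 0 < p (a i)) := by
          intro hall
          exact hnotT (Finset.mem_filter.mpr ⟨Finset.mem_univ a, hall, lt_of_not_ge hgt⟩)
        push_neg at hnpos
        obtain ⟨i, hi⟩ := hnpos
        exact Finset.prod_eq_zero (Finset.mem_univ i) (le_antisymm hi (hp (a i)))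
      rw [hstep]
      refine Finset.sum_le_sum_of_subset_of_nonneg ?_
        (fun a _ _ => Finset.prod_nonneg fun i _ => hp (a i))
      intro a ha
      exact Finset.mem_filter.mpr ⟨Finset.mem_univ a, (Finset.mem_filter.mp ha).2⟩
    have hcheb := chebyshev p f hp hp1 hmean hn hδ
    have hlow : 1 - V / (δ^2 * n) ≤ ∑ a ∈ T, ∏ i, p (a i) := by
      have := le_trans hcompl_le hcheb
      rw [← hccomp] at this
      linarith
    exact le_trans hlow hx_le
  -- squeeze
  have hupper : ∀ n : ℕ, FGamma (tpow ρ n) ((⌊(2:ℝ)^(r * (n:ℝ))⌋:ℤ):ℝ) ≤ 1 :=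
    fun n => fgamma_le_one (htpow_psd n) (htpow_tr n) _
  have hlowlim : Tendsto (fun n : ℕ => 1 - V / (δ^2 * n)) atTop (nhds 1) := by
    have he : (fun n : ℕ => 1 - V / (δ^2 * n)) = fun n : ℕ => 1 - (V/δ^2) / n := by
      funext n
      rw [div_div]
    rw [he]
    have h0 : Tendsto (fun n : ℕ => (V/δ^2) / n) atTop (nhds 0) :=
      tendsto_const_div_atTop_nhds_zero_nat _
    simpa using (tendsto_const_nhds (x := (1:ℝ)) (f := atTop)).sub h0
  refine tendsto_of_tendsto_of_tendsto_of_le_of_le' hlowlim tendsto_const_nhds ?_ ?_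
  · filter_upwards [eventually_ge_atTop 1] with n hn
    exact key n hn
  · exact Filter.Eventually.of_forall hupper
end protocol2

section glue
variable {v : ℕ}

theorem tpow_psd (ρ : Matrix (Fin v × Fin v) (Fin v × Fin v) ℂ) (hρ : ρ.PosSemidef) (n : ℕ) :
    (tpow ρ n).PosSemidef := mtprod_psd (A := fun _ : Fin n => ρ) (fun _ => hρ)

theorem tpow_tr (ρ : Matrix (Fin v × Fin v) (Fin v × Fin v) ℂ) (hρtr : ρ.trace = 1) (n : ℕ) :
    (tpow ρ n).trace = 1 := by
  have he : tpow ρ n = mtprod (fun _ : Fin n => ρ) := rfl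
  rw [he, trace_mtprod]
  simp [hρtr]

theorem fgamma_one_eq {ι κ : Type*} [Fintype ι] [Fintype κ] [DecidableEq ι] [DecidableEq κ]
    {ρ : Matrix (ι × κ) (ι × κ) ℂ} (hρ : ρ.PosSemidef) (hρtr : ρ.trace = 1) :
    FGamma ρ 1 = 1 := by
  refine le_antisymm (fgamma_le_one hρ hρtr 1) ?_
  refine le_csSup (fgamma_bddAbove hρ hρtr 1) ?_
  refine ⟨1, Matrix.PosSemidef.one, by rw [sub_self]; exact Matrix.PosSemidef.zero, ?_, ?_, ?_⟩
  · have he : (((1/(1:ℝ)):ℝ):ℂ) • (1 : Matrix (ι × κ) (ι × κ) ℂ) - ptrans 1 = 0 := by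
      rw [ptrans_one]
      norm_num
    rw [he]
    exact Matrix.PosSemidef.zero
  · have he : ptrans (1 : Matrix (ι × κ) (ι × κ) ℂ) + (((1/(1:ℝ)):ℝ):ℂ) • 1 = 1 + 1 := by
      rw [ptrans_one]
      norm_num
    rw [he]
    exact psd_add Matrix.PosSemidef.one Matrix.PosSemidef.one
  · rw [Matrix.one_mul, hρtr]
    simp

theorem zero_mem_dgamma (ρ : Matrix (Fin v × Fin v) (Fin v × Fin v) ℂ)
    (hρ : ρ.PosSemidef) (hρtr : ρ.trace = 1) :
    (0:ℝ) ∈ {r : ℝ | 0 ≤ r ∧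
      Tendsto (fun n : ℕ => FGamma (tpow ρ n) ((⌊(2 : ℝ) ^ (r * (n : ℝ))⌋ : ℤ) : ℝ))
        atTop (nhds 1)} := by
  refine ⟨le_refl 0, ?_⟩
  have he : (fun n : ℕ => FGamma (tpow ρ n) ((⌊(2 : ℝ) ^ ((0:ℝ) * (n : ℝ))⌋ : ℤ) : ℝ))
      = fun _ : ℕ => (1:ℝ) := by
    funext n
    have h1 : ((⌊(2 : ℝ) ^ ((0:ℝ) * (n : ℝ))⌋ : ℤ) : ℝ) = 1 := by
      norm_num
    rw [h1]
    exact fgamma_one_eq (tpow_psd ρ hρ n) (tpow_tr ρ hρtr n)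
  rw [he]
  exact tendsto_const_nhds

theorem dgamma_set_bdd (hv : 1 ≤ v) (ρ : Matrix (Fin v × Fin v) (Fin v × Fin v) ℂ)
    (hρ : ρ.PosSemidef) (hρtr : ρ.trace = 1) :
    BddAbove {r : ℝ | 0 ≤ r ∧
      Tendsto (fun n : ℕ => FGamma (tpow ρ n) ((⌊(2 : ℝ) ^ (r * (n : ℝ))⌋ : ℤ) : ℝ))
        atTop (nhds 1)} := by
  refine ⟨Real.logb 2 v + 1, fun r hr => ?_⟩
  obtain ⟨hr0, hlim⟩ := hr
  by_contra hgt
  push_neg at hgt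
  set C := Real.logb 2 v with hC
  have hvpos : (0:ℝ) < v := by exact_mod_cast hv
  have hC0 : 0 ≤ C := Real.logb_nonneg one_lt_two (by exact_mod_cast hv)
  have hr1 : 1 < r := by linarith
  have hb : ∀ n : ℕ, 1 ≤ n →
      FGamma (tpow ρ n) ((⌊(2:ℝ)^(r * (n:ℝ))⌋:ℤ):ℝ) ≤ 2 * ((2:ℝ)^(C - r))^n := by
    intro n hn
    have hn1 : (1:ℝ) ≤ (n:ℝ) := by exact_mod_cast hn
    set K : ℝ := ((⌊(2:ℝ)^(r * (n:ℝ))⌋:ℤ):ℝ) with hK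
    have hK1 : (1:ℝ) ≤ K := floor_pow_ge_one hr0 n
    have hKpos : (0:ℝ) < K := by linarith
    have hfg := fgamma_le_frob (tpow_psd ρ hρ n) (tpow_tr ρ hρtr n) hKpos
    have hcard : ((Fintype.card ((Fin n → Fin v) × (Fin n → Fin v)) : ℕ) : ℝ)
        = ((v:ℝ)^n)^2 := by
      rw [Fintype.card_prod, Fintype.card_fun]
      push_cast
      simp [pow_two]
    have hsqrt : Real.sqrt (Fintype.card ((Fin n → Fin v) × (Fin n → Fin v)))
        = (v:ℝ)^n := by
      rw [hcard, Real.sqrt_sq (by positivity)]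
    rw [hsqrt] at hfg
    have h2 : (2:ℝ) ≤ (2:ℝ)^(r * (n:ℝ)) := by
      conv_lhs => rw [show (2:ℝ) = (2:ℝ)^((1:ℝ)) from (Real.rpow_one 2).symm]
      refine Real.rpow_le_rpow_of_exponent_le one_le_two ?_
      nlinarith
    have hKge : (2:ℝ)^(r * (n:ℝ))/2 ≤ K := by
      have hfl := Int.sub_one_lt_floor ((2:ℝ)^(r * (n:ℝ)))
      have : (2:ℝ)^(r * (n:ℝ)) - 1 ≤ K := by
        rw [hK]
        exact le_of_lt hfl
      linarith
    have hx2 : (0:ℝ) < (2:ℝ)^(r * (n:ℝ)) := Real.rpow_pos_of_pos two_pos _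
    have h1K : 1/K ≤ 2/(2:ℝ)^(r * (n:ℝ)) := by
      have hd : (0:ℝ) < (2:ℝ)^(r * (n:ℝ))/2 := by linarith
      have := one_div_le_one_div_of_le hd hKge
      calc 1/K ≤ 1/((2:ℝ)^(r * (n:ℝ))/2) := this
        _ = 2/(2:ℝ)^(r * (n:ℝ)) := by field_simp
    have hbase : (2:ℝ)^C = v := Real.rpow_logb two_pos (by norm_num) hvpos
    have hv2 : (2:ℝ)^(C * (n:ℝ)) = ((v:ℝ))^n := by
      rw [Real.rpow_mul (by norm_num) C (n:ℝ), hbase, Real.rpow_natCast]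
    have hvn0 : (0:ℝ) ≤ (v:ℝ)^n := by positivity
    calc FGamma (tpow ρ n) K ≤ (v:ℝ)^n / K := hfg
      _ = (v:ℝ)^n * (1/K) := by ring
      _ ≤ (v:ℝ)^n * (2/(2:ℝ)^(r*(n:ℝ))) := mul_le_mul_of_nonneg_left h1K hvn0
      _ = 2 * ((2:ℝ)^(C*(n:ℝ)) / (2:ℝ)^(r*(n:ℝ))) := by rw [hv2]; ring
      _ = 2 * (2:ℝ)^(C*(n:ℝ) - r*(n:ℝ)) := by rw [← Real.rpow_sub two_pos]
      _ = 2 * ((2:ℝ)^(C - r))^n := by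
          rw [show C*(n:ℝ) - r*(n:ℝ) = (C - r)*(n:ℝ) from by ring,
            Real.rpow_mul (by norm_num), Real.rpow_natCast]
  have hgl : Tendsto (fun n : ℕ => 2 * ((2:ℝ)^(C - r))^n) atTop (nhds 0) := by
    have hlt1 : (2:ℝ)^(C - r) < 1 :=
      Real.rpow_lt_one_of_one_lt_of_neg one_lt_two (by linarith)
    have hge0 : (0:ℝ) ≤ (2:ℝ)^(C - r) := (Real.rpow_pos_of_pos two_pos _).le
    have h := tendsto_pow_atTop_nhds_zero_of_lt_one hge0 hlt1
    have h2 := h.const_mul (2:ℝ)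
    simpa using h2
  have hle : (1:ℝ) ≤ 0 := by
    refine le_of_tendsto_of_tendsto hlim hgl ?_
    filter_upwards [eventually_ge_atTop 1] with n hn
    exact hb n hn
  linarith
end glue

/-- Lower bound on p.p.t. distillable entanglement from a partition of the identity
into orthogonal projections. -/
theorem DGamma_partition_lower_bound {v : ℕ} {m : ℕ}
    (P : Fin m → Matrix (Fin v × Fin v) (Fin v × Fin v) ℂ)
    (hproj : ∀ i, (P i).IsHermitian ∧ P i * P i = P i)
    (horth : ∀ i j, i ≠ j → P i * P j = 0)
    (hsum : ∑ i, P i = 1)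
    (ρ : Matrix (Fin v × Fin v) (Fin v × Fin v) ℂ)
    (hρ : ρ.PosSemidef) (hρtr : ρ.trace = 1) :
    ∑ i, ((P i * ρ).trace).re *
        (Real.logb 2 ((P i * ρ).trace).re - Real.logb 2 (maxAbsEig (ptrans (P i)))) ≤
      DGamma ρ := by
  classical
  rcases Nat.eq_zero_or_pos v with hv0 | hvpos
  · exfalso
    subst hv0
    have htr0 : ρ.trace = 0 := by
      simp [Matrix.trace]
    rw [hρtr] at htr0
    exact one_ne_zero htr0
  have hv : 1 ≤ v := hvpos
  set p : Fin m → ℝ := fun i => ((P i * ρ).trace).re with hpdef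
  set s : Fin m → ℝ := fun i => maxAbsEig (ptrans (P i)) with hsdef
  set L : ℝ := ∑ i, p i * (Real.logb 2 (p i) - Real.logb 2 (s i)) with hLdef
  have hPSD : ∀ i, (P i).PosSemidef := by
    intro i
    have h := Matrix.posSemidef_self_mul_conjTranspose (P i)
    rwa [show (P i)ᴴ = P i from (hproj i).1, (hproj i).2] at h
  have htrP : ∀ i, (P i * ρ).trace = ((p i : ℝ) : ℂ) := by
    intro i
    obtain ⟨t, _, htr⟩ := trace_herm_idem_psd (hproj i).1 (hproj i).2 hρ
    have hpi : p i = t := by rw [hpdef]; simp [htr]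
    rw [hpi, htr]
  have hp : ∀ i, 0 ≤ p i := by
    intro i
    obtain ⟨t, ht, htr⟩ := trace_herm_idem_psd (hproj i).1 (hproj i).2 hρ
    have hpi : p i = t := by rw [hpdef]; simp [htr]
    rw [hpi]; exact ht
  have hp1 : ∑ i, p i = 1 := by
    have hsumtr : ∑ i, (P i * ρ).trace = (1:ℂ) := by
      rw [← Matrix.trace_sum, ← Finset.sum_mul, hsum, Matrix.one_mul, hρtr]
    rw [Finset.sum_congr rfl fun i _ => htrP i] at hsumtr
    exact_mod_cast hsumtr
  have hptherm : ∀ i, (ptrans (P i)).IsHermitian := fun i => ptrans_isHermitian (hproj i).1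
  have hseig : ∀ i j, |(hptherm i).eigenvalues j| ≤ s i := fun i j => eig_le_maxAbsEig _ j
  have hspos : ∀ i, 0 < p i → 0 < s i := by
    intro i hpi
    refine maxAbsEig_pos (hptherm i) ?_
    intro h0
    have hP0 : P i = 0 := by
      have hpp : ptrans (ptrans (P i)) = P i := rfl
      rw [← hpp, h0]
      ext x y
      rfl
    have hz : p i = 0 := by rw [hpdef]; simp [hP0]
    linarith
  rw [DGamma]
  have hbdd := dgamma_set_bdd hv ρ hρ hρtr
  have h0 := zero_mem_dgamma ρ hρ hρtr
  refine le_of_forall_sub_le ?_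
  intro ε hε
  by_cases hLε : 0 < L - ε
  · refine le_csSup hbdd ?_
    exact ⟨hLε.le, protocol_tendsto P hPSD hsum ρ hρ hρtr p s htrP hp hp1 hspos hptherm hseig
      L ε hLdef hε hLε⟩
  · push_neg at hLε
    exact le_trans hLε (le_csSup hbdd h0)
end
end
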